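/- arXiv:1909.13309 — 6 statements merged into one kernel-verified Lean document; each statement's English description precedes it below -/
import Mathlib

section
/- For complex m×n matrices A and B with q = min(m,n), the absolute value of Tr(A†B) is at most the sum over i = 1,…,q of σ_i(A)·σ_i(B), where σ_i denotes the i-th largest singular value. -/
open Matrix BigOperators Kronecker
open scoped ComplexOrder

/-- The rank-one projector `|v⟩⟨v|`. -/
noncomputable def dyad {α : Type*} [Fintype α] (v : α → ℂ) : Matrix α α ℂ :=
  Matrix.vecMulVec v (star v)

/-- Partial trace over the second tensor factor. -/
noncomputable def ptraceB {m n : ℕ} (ρ : Matrix (Fin m × Fin n) (Fin m × Fin n) ℂ) :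
    Matrix (Fin m) (Fin m) ℂ := fun i j => ∑ k : Fin n, ρ (i, k) (j, k)

/-- Partial trace over the first tensor factor. -/
noncomputable def ptraceA {m n : ℕ} (ρ : Matrix (Fin m × Fin n) (Fin m × Fin n) ℂ) :
    Matrix (Fin n) (Fin n) ℂ := fun i j => ∑ k : Fin m, ρ (k, i) (k, j)

/-- A bipartite state is separable if it is a finite convex combination of
tensor products of density matrices. -/
def SepState {m n : ℕ} (ρ : Matrix (Fin m × Fin n) (Fin m × Fin n) ℂ) : Prop :=
  ∃ (d : ℕ) (q : Fin d → ℝ) (σ : Fin d → Matrix (Fin m) (Fin m) ℂ)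
    (τ : Fin d → Matrix (Fin n) (Fin n) ℂ),
    (∀ i, 0 ≤ q i) ∧ (∑ i, q i = 1) ∧
    (∀ i, (σ i).PosSemidef ∧ (σ i).trace = 1) ∧
    (∀ i, (τ i).PosSemidef ∧ (τ i).trace = 1) ∧
    ρ = ∑ i, (q i : ℂ) • (σ i ⊗ₖ τ i)

open Classical in
/-- Eigenvalues of a Hermitian matrix arranged in non-increasing order
(`eigsDesc A 0` is the largest eigenvalue); junk value otherwise. -/
noncomputable def eigsDesc {k : ℕ} (A : Matrix (Fin k) (Fin k) ℂ) : Fin k → ℝ :=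
  if h : A.IsHermitian then fun i => (h.eigenvalues ∘ Tuple.sort h.eigenvalues) i.rev
  else fun _ => 0

/-- The `i`-th largest singular value of an `m × n` complex matrix,
`i : Fin (min m n)`. -/
noncomputable def singVal {m n : ℕ} (A : Matrix (Fin m) (Fin n) ℂ) (i : Fin (min m n)) : ℝ :=
  Real.sqrt (eigsDesc (Aᴴ * A) (Fin.castLE (min_le_right m n) i))

open Classical in
/-- The largest eigenvalue of a Hermitian matrix; junk value otherwise. -/
noncomputable def lamMax {α : Type*} [Fintype α] [DecidableEq α] (A : Matrix α α ℂ) : ℝ :=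
  if h : A.IsHermitian then ⨆ i, h.eigenvalues i else 0

/-- Frobenius (Hilbert–Schmidt) norm of a matrix. -/
noncomputable def frobNorm {m n : ℕ} (A : Matrix (Fin m) (Fin n) ℂ) : ℝ :=
  Real.sqrt ((Aᴴ * A).trace.re)

lemma aux_count (n c : ℕ) (hc : c < n) :
    ∑ i ∈ Finset.range n, (if i ≤ c then (1:ℝ) else 0) = c + 1 := by
  rw [← Finset.sum_filter]
  have : (Finset.range n).filter (fun i => i ≤ c) = Finset.range (c+1) := by
    ext j; simp [Nat.lt_succ_iff]; omega
  simp [this]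

lemma vnkey (n : ℕ) (a b : ℕ → ℝ) (D : ℕ → ℕ → ℝ)
    (ha0 : ∀ i, 0 ≤ a i) (hb0 : ∀ i, 0 ≤ b i)
    (haa : ∀ i j, i ≤ j → a j ≤ a i) (hbb : ∀ i j, i ≤ j → b j ≤ b i)
    (han : ∀ i, n ≤ i → a i = 0) (hbn : ∀ i, n ≤ i → b i = 0)
    (hD0 : ∀ i j, 0 ≤ D i j)
    (hrow : ∀ i, ∑ j ∈ Finset.range n, D i j ≤ 1)
    (hcol : ∀ j, ∑ i ∈ Finset.range n, D i j ≤ 1) :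
    ∑ i ∈ Finset.range n, ∑ j ∈ Finset.range n, a i * b j * D i j
      ≤ ∑ i ∈ Finset.range n, a i * b i := by
  have hα0 : ∀ k, 0 ≤ a k - a (k+1) := fun k => sub_nonneg.2 (haa k (k+1) (Nat.le_succ k))
  have hβ0 : ∀ k, 0 ≤ b k - b (k+1) := fun k => sub_nonneg.2 (hbb k (k+1) (Nat.le_succ k))
  set α : ℕ → ℝ := fun k => a k - a (k+1) with hα
  set β : ℕ → ℝ := fun k => b k - b (k+1) with hβ
  have hrep : ∀ (f : ℕ → ℝ), (∀ i j, i ≤ j → f j ≤ f i) → (∀ i, n ≤ i → f i = 0) →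
      ∀ i, i ≤ n → f i = ∑ k ∈ Finset.range n, (if i ≤ k then f k - f (k+1) else 0) := by
    intro f hf hfn i hi
    rw [← Finset.sum_filter]
    have : (Finset.range n).filter (fun k => i ≤ k) = Finset.Ico i n := by
      ext j; simp [Finset.mem_Ico]; omega
    rw [this, Finset.sum_Ico_eq_sub _ hi, Finset.sum_range_sub' f, Finset.sum_range_sub' f]
    rw [hfn n le_rfl]; ring
  set S : ℕ → ℕ → ℝ := fun k l => ∑ i ∈ Finset.range n, ∑ j ∈ Finset.range n,
      (if i ≤ k then (1:ℝ) else 0) * (if j ≤ l then (1:ℝ) else 0) * D i j with hS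
  -- LHS rewrite
  have step1 : ∑ i ∈ Finset.range n, ∑ j ∈ Finset.range n, a i * b j * D i j
      = ∑ k ∈ Finset.range n, ∑ l ∈ Finset.range n, α k * β l * S k l := by
    have e1 : ∀ i ∈ Finset.range n, ∀ j ∈ Finset.range n, a i * b j * D i j
        = ∑ k ∈ Finset.range n, ∑ l ∈ Finset.range n,
            (if i ≤ k then α k else 0) * (if j ≤ l then β l else 0) * D i j := by
      intro i hi j hj
      rw [hrep a haa han i (le_of_lt (Finset.mem_range.1 hi)),
          hrep b hbb hbn j (le_of_lt (Finset.mem_range.1 hj)),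
          Finset.sum_mul_sum, Finset.sum_mul]
      exact Finset.sum_congr rfl fun k _ => by rw [Finset.sum_mul]
    calc ∑ i ∈ Finset.range n, ∑ j ∈ Finset.range n, a i * b j * D i j
        = ∑ i ∈ Finset.range n, ∑ j ∈ Finset.range n, ∑ k ∈ Finset.range n,
            ∑ l ∈ Finset.range n, (if i ≤ k then α k else 0) * (if j ≤ l then β l else 0) * D i j :=
          Finset.sum_congr rfl fun i hi => Finset.sum_congr rfl fun j hj => e1 i hi j hj
      _ = ∑ i ∈ Finset.range n, ∑ k ∈ Finset.range n, ∑ j ∈ Finset.range n,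
            ∑ l ∈ Finset.range n, (if i ≤ k then α k else 0) * (if j ≤ l then β l else 0) * D i j :=
          Finset.sum_congr rfl fun i _ => Finset.sum_comm
      _ = ∑ k ∈ Finset.range n, ∑ i ∈ Finset.range n, ∑ j ∈ Finset.range n,
            ∑ l ∈ Finset.range n, (if i ≤ k then α k else 0) * (if j ≤ l then β l else 0) * D i j :=
          Finset.sum_comm
      _ = ∑ k ∈ Finset.range n, ∑ i ∈ Finset.range n, ∑ l ∈ Finset.range n,
            ∑ j ∈ Finset.range n, (if i ≤ k then α k else 0) * (if j ≤ l then β l else 0) * D i j :=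
          Finset.sum_congr rfl fun k _ => Finset.sum_congr rfl fun i _ => Finset.sum_comm
      _ = ∑ k ∈ Finset.range n, ∑ l ∈ Finset.range n, ∑ i ∈ Finset.range n,
            ∑ j ∈ Finset.range n, (if i ≤ k then α k else 0) * (if j ≤ l then β l else 0) * D i j :=
          Finset.sum_congr rfl fun k _ => Finset.sum_comm
      _ = ∑ k ∈ Finset.range n, ∑ l ∈ Finset.range n, α k * β l * S k l := by
          refine Finset.sum_congr rfl fun k _ => Finset.sum_congr rfl fun l _ => ?_
          rw [hS, Finset.mul_sum]
          refine Finset.sum_congr rfl fun i _ => ?_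
          rw [Finset.mul_sum]
          refine Finset.sum_congr rfl fun j _ => ?_
          split_ifs <;> ring
  -- RHS rewrite
  have step2 : ∑ i ∈ Finset.range n, a i * b i
      = ∑ k ∈ Finset.range n, ∑ l ∈ Finset.range n, α k * β l * ((min k l : ℕ) + 1) := by
    have e1 : ∀ i ∈ Finset.range n, a i * b i
        = ∑ k ∈ Finset.range n, ∑ l ∈ Finset.range n,
            (if i ≤ k then α k else 0) * (if i ≤ l then β l else 0) := by
      intro i hi
      rw [hrep a haa han i (le_of_lt (Finset.mem_range.1 hi)),
          hrep b hbb hbn i (le_of_lt (Finset.mem_range.1 hi)), Finset.sum_mul_sum]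
    calc ∑ i ∈ Finset.range n, a i * b i
        = ∑ i ∈ Finset.range n, ∑ k ∈ Finset.range n, ∑ l ∈ Finset.range n,
            (if i ≤ k then α k else 0) * (if i ≤ l then β l else 0) :=
          Finset.sum_congr rfl e1
      _ = ∑ k ∈ Finset.range n, ∑ i ∈ Finset.range n, ∑ l ∈ Finset.range n,
            (if i ≤ k then α k else 0) * (if i ≤ l then β l else 0) := Finset.sum_comm
      _ = ∑ k ∈ Finset.range n, ∑ l ∈ Finset.range n, ∑ i ∈ Finset.range n,
            (if i ≤ k then α k else 0) * (if i ≤ l then β l else 0) :=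
          Finset.sum_congr rfl fun k _ => Finset.sum_comm
      _ = ∑ k ∈ Finset.range n, ∑ l ∈ Finset.range n, α k * β l * ((min k l : ℕ) + 1) := by
          refine Finset.sum_congr rfl fun k hk => Finset.sum_congr rfl fun l hl => ?_
          have : ∀ i, (if i ≤ k then α k else 0) * (if i ≤ l then β l else 0)
              = α k * β l * (if i ≤ min k l then (1:ℝ) else 0) := by
            intro i
            rcases le_or_gt i (min k l) with h | h
            · rw [if_pos h, if_pos (le_trans h (min_le_left _ _)),
                  if_pos (le_trans h (min_le_right _ _))]; ring
            · rw [if_neg (not_le.2 h)]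
              rcases le_or_gt i k with h1 | h1
              · have h2 : ¬ i ≤ l := by omega
                rw [if_pos h1, if_neg h2]; ring
              · rw [if_neg (not_le.2 h1)]; ring
          rw [Finset.sum_congr rfl fun i _ => this i, ← Finset.mul_sum,
              aux_count n (min k l) (lt_of_le_of_lt (min_le_left _ _) (Finset.mem_range.1 hk))]
  -- bound S
  have hSbound : ∀ k ∈ Finset.range n, ∀ l ∈ Finset.range n, S k l ≤ (min k l : ℕ) + 1 := by
    intro k hk l hl
    have bound1 : S k l ≤ (k : ℝ) + 1 := by
      rw [hS]
      calc ∑ i ∈ Finset.range n, ∑ j ∈ Finset.range n,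
            (if i ≤ k then (1:ℝ) else 0) * (if j ≤ l then (1:ℝ) else 0) * D i j
          ≤ ∑ i ∈ Finset.range n, (if i ≤ k then (1:ℝ) else 0) := by
            refine Finset.sum_le_sum fun i _ => ?_
            rcases le_or_gt i k with h | h
            · simp only [if_pos h, one_mul]
              calc ∑ j ∈ Finset.range n, (if j ≤ l then (1:ℝ) else 0) * D i j
                  ≤ ∑ j ∈ Finset.range n, D i j := by
                    refine Finset.sum_le_sum fun j _ => ?_
                    split_ifs <;> simp [hD0 i j]
                _ ≤ 1 := hrow i
            · simp [if_neg (not_le.2 h)]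
        _ = (k:ℝ) + 1 := aux_count n k (Finset.mem_range.1 hk)
    have bound2 : S k l ≤ (l : ℝ) + 1 := by
      rw [hS]; dsimp only; rw [Finset.sum_comm]
      calc ∑ j ∈ Finset.range n, ∑ i ∈ Finset.range n,
            (if i ≤ k then (1:ℝ) else 0) * (if j ≤ l then (1:ℝ) else 0) * D i j
          ≤ ∑ j ∈ Finset.range n, (if j ≤ l then (1:ℝ) else 0) := by
            refine Finset.sum_le_sum fun j _ => ?_
            rcases le_or_gt j l with h | h
            · simp only [if_pos h, mul_one]
              calc ∑ i ∈ Finset.range n, (if i ≤ k then (1:ℝ) else 0) * D i j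
                  ≤ ∑ i ∈ Finset.range n, D i j := by
                    refine Finset.sum_le_sum fun i _ => ?_
                    split_ifs <;> simp [hD0 i j]
                _ ≤ 1 := hcol j
            · simp [if_neg (not_le.2 h)]
        _ = (l:ℝ) + 1 := aux_count n l (Finset.mem_range.1 hl)
    rcases le_total k l with h | h
    · rw [min_eq_left h]; exact_mod_cast bound1
    · rw [min_eq_right h]; exact_mod_cast bound2
  rw [step1, step2]
  refine Finset.sum_le_sum fun k hk => Finset.sum_le_sum fun l hl => ?_
  exact mul_le_mul_of_nonneg_left (hSbound k hk l hl) (mul_nonneg (hα0 k) (hβ0 l))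

lemma dps {M N : ℕ} (w : Fin M → ℂ) (h : Fin N → Fin M → ℂ) :
    w ⬝ᵥ (∑ j, h j) = ∑ j, w ⬝ᵥ h j := by
  simp only [dotProduct, Finset.sum_apply, Finset.mul_sum]
  exact Finset.sum_comm

lemma sdp {M N : ℕ} (w : Fin M → ℂ) (h : Fin N → Fin M → ℂ) :
    (∑ j, h j) ⬝ᵥ w = ∑ j, h j ⬝ᵥ w := by
  simp only [dotProduct, Finset.sum_apply, Finset.sum_mul]
  exact Finset.sum_comm

lemma bessel {M N : ℕ} (f : Fin N → Fin M → ℂ)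
    (hf : ∀ j k, star (f j) ⬝ᵥ f k = if j = k then star (f j) ⬝ᵥ f j else 0)
    (hf1 : ∀ j, star (f j) ⬝ᵥ f j = 0 ∨ star (f j) ⬝ᵥ f j = 1)
    (g : Fin M → ℂ) (hg : (star g ⬝ᵥ g).re ≤ 1) :
    ∑ j, (‖star g ⬝ᵥ f j‖)^2 ≤ 1 := by
  set c : Fin N → ℂ := fun j => star (f j) ⬝ᵥ g with hc
  have hconj : ∀ j, star g ⬝ᵥ f j = star (c j) := by
    intro j
    rw [hc]
    dsimp only
    rw [← star_dotProduct_star, star_star]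
  set r : Fin M → ℂ := g - ∑ j, c j • f j with hr
  have expand : star r ⬝ᵥ r = star g ⬝ᵥ g - ∑ j, star (c j) * c j := by
    rw [hr]
    have hstar : star (g - ∑ j, c j • f j) = star g - ∑ j, star (c j) • star (f j) := by
      rw [star_sub, star_sum]
      congr 1
      exact Finset.sum_congr rfl fun j _ => star_smul _ _
    rw [hstar, sub_dotProduct, dotProduct_sub, dotProduct_sub,
        sdp, dps, dps]
    have t2 : ∑ j, star g ⬝ᵥ (c j • f j) = ∑ j, star (c j) * c j := by
      refine Finset.sum_congr rfl fun j _ => ?_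
      rw [dotProduct_smul, hconj j]
      simp [mul_comm]
    have t3 : ∑ j, (star (c j) • star (f j)) ⬝ᵥ g = ∑ j, star (c j) * c j := by
      refine Finset.sum_congr rfl fun j _ => ?_
      rw [smul_dotProduct]
      rw [hc]
      simp [smul_eq_mul]
    have t4 : ∑ j, (∑ k, star (c k) • star (f k)) ⬝ᵥ (c j • f j) = ∑ j, star (c j) * c j := by
      refine Finset.sum_congr rfl fun j _ => ?_
      rw [sdp]
      have : ∀ k, (star (c k) • star (f k)) ⬝ᵥ (c j • f j)
          = star (c k) * c j * (if k = j then star (f k) ⬝ᵥ f k else 0) := by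
        intro k
        rw [smul_dotProduct, dotProduct_smul, ← hf k j]
        simp [smul_eq_mul]; ring
      rw [Finset.sum_congr rfl fun k _ => this k]
      simp only [mul_ite, mul_zero]
      rw [Finset.sum_ite_eq' (Finset.univ) j]
      simp only [Finset.mem_univ, if_pos]
      rcases hf1 j with h | h
      · rw [h]
        have : c j = 0 := by
          rw [hc]
          dsimp only
          have := dotProduct_star_self_eq_zero.1 h
          rw [this]
          simp
        simp [this]
      · rw [h]; ring
    rw [t2, t3, t4]
    ring
  have hnn : 0 ≤ (star r ⬝ᵥ r).re := by
    have := dotProduct_star_self_nonneg r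
    exact (Complex.le_def.1 this).1
  rw [expand] at hnn
  simp only [Complex.sub_re, Complex.re_sum] at hnn
  have habs : ∀ j, (star (c j) * c j).re = (‖star g ⬝ᵥ f j‖)^2 := by
    intro j
    have h1 : star (c j) * c j = (((‖c j‖ : ℝ) : ℂ))^2 := by
      rw [show star (c j) = (starRingEnd ℂ) (c j) from rfl, mul_comm, Complex.mul_conj]
      norm_cast
      rw [Complex.sq_norm]
    have h2 : ‖star (c j)‖ = ‖c j‖ := Complex.norm_conj _
    rw [hconj j, h2, h1, ← Complex.ofReal_pow, Complex.ofReal_re]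
  calc ∑ j, (‖star g ⬝ᵥ f j‖)^2 = ∑ j, (star (c j) * c j).re :=
        Finset.sum_congr rfl fun j _ => (habs j).symm
    _ ≤ (star g ⬝ᵥ g).re := by linarith
    _ ≤ 1 := hg

lemma eigsDesc_spec {k : ℕ} {M : Matrix (Fin k) (Fin k) ℂ} (hM : M.IsHermitian) :
    ∃ e : Equiv.Perm (Fin k), (∀ i, eigsDesc M i = hM.eigenvalues (e i)) ∧
      (∀ i j : Fin k, i ≤ j → eigsDesc M j ≤ eigsDesc M i) := by
  have h0 : eigsDesc M = fun i => (hM.eigenvalues ∘ Tuple.sort hM.eigenvalues) i.rev := by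
    simp only [eigsDesc]
    rw [dif_pos hM]
  refine ⟨(Fin.revPerm).trans (Tuple.sort hM.eigenvalues), fun i => by rw [h0]; rfl, ?_⟩
  intro i j hij
  rw [h0]
  exact Tuple.monotone_sort hM.eigenvalues (Fin.rev_le_rev.2 hij)

lemma eigsDesc_nonneg {k : ℕ} {M : Matrix (Fin k) (Fin k) ℂ} (hM : M.PosSemidef) (i : Fin k) :
    0 ≤ eigsDesc M i := by
  obtain ⟨e, he, -⟩ := eigsDesc_spec hM.1
  rw [he]
  exact hM.eigenvalues_nonneg _

lemma eigsDesc_eq_zero {k : ℕ} {M : Matrix (Fin k) (Fin k) ℂ} (hM : M.PosSemidef)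
    {r : ℕ} (hr : M.rank ≤ r) (i : Fin k) (hi : r ≤ (i : ℕ)) : eigsDesc M i = 0 := by
  by_contra h
  obtain ⟨e, he, hanti⟩ := eigsDesc_spec hM.1
  have hpos : 0 < eigsDesc M i := lt_of_le_of_ne (eigsDesc_nonneg hM i) (Ne.symm h)
  have hsub : Finset.Iic i ⊆ Finset.univ.filter (fun j : Fin k => eigsDesc M j ≠ 0) := by
    intro j hj
    simp only [Finset.mem_filter, Finset.mem_univ, true_and]
    have h4 := hanti j i (Finset.mem_Iic.1 hj)
    have : 0 < eigsDesc M j := lt_of_lt_of_le hpos h4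
    exact ne_of_gt this
  have h1 : (i : ℕ) + 1 ≤ (Finset.univ.filter (fun j : Fin k => eigsDesc M j ≠ 0)).card := by
    calc (i : ℕ) + 1 = (Finset.Iic i).card := (Fin.card_Iic i).symm
      _ ≤ _ := Finset.card_le_card hsub
  have h2 : (Finset.univ.filter (fun j : Fin k => eigsDesc M j ≠ 0)).card
      ≤ (Finset.univ.filter (fun j : Fin k => hM.1.eigenvalues j ≠ 0)).card := by
    refine Finset.card_le_card_of_injOn (fun j => e j) ?_ ?_
    · intro j hj
      simp only [Finset.mem_coe, Finset.mem_filter, Finset.mem_univ, true_and] at hj ⊢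
      rwa [he j] at hj
    · exact fun a _ b _ hab => e.injective hab
  have h3 : (Finset.univ.filter (fun j : Fin k => hM.1.eigenvalues j ≠ 0)).card = M.rank := by
    rw [hM.1.rank_eq_card_non_zero_eigs, Fintype.card_subtype]
  omega

lemma dot_conj {m n : ℕ} (A B : Matrix (Fin m) (Fin n) ℂ) (a b : Fin n → ℂ) :
    star (A *ᵥ a) ⬝ᵥ (B *ᵥ b) = star a ⬝ᵥ ((Aᴴ * B) *ᵥ b) := by
  rw [Matrix.star_mulVec, Matrix.dotProduct_mulVec, Matrix.dotProduct_mulVec,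
      Matrix.vecMul_vecMul]

lemma trace_eq_sum {n : ℕ} (M : Matrix (Fin n) (Fin n) ℂ) (v w : Fin n → Fin n → ℂ)
    (hv : ∀ i j, star (v i) ⬝ᵥ v j = if i = j then 1 else 0)
    (hw : ∀ i j, star (w i) ⬝ᵥ w j = if i = j then 1 else 0) :
    M.trace = ∑ i, ∑ j, (star (v i) ⬝ᵥ (M *ᵥ w j)) * (star (w j) ⬝ᵥ v i) := by
  set V : Matrix (Fin n) (Fin n) ℂ := Matrix.of fun k i => v i k with hV
  set X : Matrix (Fin n) (Fin n) ℂ := Matrix.of fun k i => w i k with hX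
  have hVU : Vᴴ * V = 1 := by
    ext i j
    have := hv i j
    simpa [hV, Matrix.mul_apply, Matrix.conjTranspose_apply, dotProduct,
      Matrix.one_apply] using this
  have hXU : Xᴴ * X = 1 := by
    ext i j
    have := hw i j
    simpa [hX, Matrix.mul_apply, Matrix.conjTranspose_apply, dotProduct,
      Matrix.one_apply] using this
  have hVV : V * Vᴴ = 1 := mul_eq_one_comm.1 hVU
  have hXX : X * Xᴴ = 1 := mul_eq_one_comm.1 hXU
  have entry1 : ∀ i j, (Vᴴ * (M * X)) i j = star (v i) ⬝ᵥ (M *ᵥ w j) := by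
    intro i j
    simp [hV, hX, Matrix.mul_apply, Matrix.conjTranspose_apply, dotProduct, Matrix.mulVec]
  have entry2 : ∀ j i, (Xᴴ * V) j i = star (w j) ⬝ᵥ v i := by
    intro j i
    simp [hV, hX, Matrix.mul_apply, Matrix.conjTranspose_apply, dotProduct]
  have rhs_eq : ∑ i, ∑ j, (star (v i) ⬝ᵥ (M *ᵥ w j)) * (star (w j) ⬝ᵥ v i)
      = ((Vᴴ * (M * X)) * (Xᴴ * V)).trace := by
    rw [Matrix.trace]
    refine (Finset.sum_congr rfl fun i _ => ?_).symm
    rw [Matrix.diag_apply, Matrix.mul_apply]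
    exact Finset.sum_congr rfl fun j _ => by rw [entry1, entry2]
  rw [rhs_eq]
  exact (calc (Vᴴ * (M * X) * (Xᴴ * V)).trace
      = ((Xᴴ * V) * Vᴴ * (M * X)).trace := by rw [Matrix.trace_mul_cycle]
    _ = (Xᴴ * (V * Vᴴ) * (M * X)).trace := by rw [Matrix.mul_assoc Xᴴ V Vᴴ]
    _ = (Xᴴ * (M * X)).trace := by rw [hVV, Matrix.mul_one]
    _ = ((M * X) * Xᴴ).trace := by rw [Matrix.trace_mul_comm]
    _ = (M * (X * Xᴴ)).trace := by rw [Matrix.mul_assoc]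
    _ = M.trace := by rw [hXX, Matrix.mul_one]).symm

lemma svd_exists {m n : ℕ} (A : Matrix (Fin m) (Fin n) ℂ) :
    ∃ (v : Fin n → Fin n → ℂ) (u : Fin n → Fin m → ℂ),
      (∀ i j, star (v i) ⬝ᵥ v j = if i = j then 1 else 0) ∧
      (∀ i j, star (u i) ⬝ᵥ u j = if i = j then star (u i) ⬝ᵥ u i else 0) ∧
      (∀ i, star (u i) ⬝ᵥ u i = 0 ∨ star (u i) ⬝ᵥ u i = 1) ∧
      (∀ i, A *ᵥ v i = ((Real.sqrt (eigsDesc (Aᴴ * A) i) : ℝ) : ℂ) • u i) := by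
  have hH : (Aᴴ * A).IsHermitian := Matrix.isHermitian_conjTranspose_mul_self A
  have hPSD : (Aᴴ * A).PosSemidef := Matrix.posSemidef_conjTranspose_mul_self A
  obtain ⟨e, he, hanti⟩ := eigsDesc_spec hH
  set v : Fin n → Fin n → ℂ := fun i => ⇑(hH.eigenvectorBasis (e i)) with hv
  have hvorth : ∀ i j, star (v i) ⬝ᵥ v j = if i = j then 1 else 0 := by
    intro i j
    have h1 := orthonormal_iff_ite.mp hH.eigenvectorBasis.orthonormal (e i) (e j)
    rw [EuclideanSpace.inner_eq_star_dotProduct] at h1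
    rw [hv]
    dsimp only
    rw [dotProduct_comm] at h1
    rw [h1]
    simp [e.injective.eq_iff]
  have heig : ∀ i, (Aᴴ * A) *ᵥ v i = (eigsDesc (Aᴴ * A) i) • v i := by
    intro i
    rw [hv]
    dsimp only
    rw [hH.mulVec_eigenvectorBasis (e i), he i]
  set s : Fin n → ℝ := fun i => Real.sqrt (eigsDesc (Aᴴ * A) i) with hs
  have hs2 : ∀ i, (s i) ^ 2 = eigsDesc (Aᴴ * A) i := fun i =>
    Real.sq_sqrt (eigsDesc_nonneg hPSD i)
  set p : Fin n → Fin m → ℂ := fun i => A *ᵥ v i with hp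
  have hpp : ∀ i j, star (p i) ⬝ᵥ p j
      = if i = j then ((eigsDesc (Aᴴ * A) i : ℝ) : ℂ) else 0 := by
    intro i j
    rw [hp]
    dsimp only
    rw [dot_conj, heig j, dotProduct_smul, hvorth i j]
    rcases eq_or_ne i j with h | h
    · subst h; simp [if_pos rfl, Complex.real_smul]
    · simp [if_neg h]
  have hp0 : ∀ i, s i = 0 → p i = 0 := by
    intro i hsi
    have h1 : eigsDesc (Aᴴ * A) i = 0 := by
      have := hs2 i
      rw [hsi] at this
      simpa using this.symm
    have h2 : star (p i) ⬝ᵥ p i = 0 := by rw [hpp i i, if_pos rfl, h1]; simp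
    exact dotProduct_star_self_eq_zero.1 h2
  classical
  set u : Fin n → Fin m → ℂ := fun i => if s i = 0 then 0 else ((s i : ℝ) : ℂ)⁻¹ • p i with hu
  have hAv : ∀ i, A *ᵥ v i = ((s i : ℝ) : ℂ) • u i := by
    intro i
    rw [hu]
    dsimp only
    rcases eq_or_ne (s i) 0 with h | h
    · rw [if_pos h, h]
      show p i = _
      rw [hp0 i h]
      simp
    · rw [if_neg h]
      show p i = _
      rw [smul_inv_smul₀ (by exact_mod_cast h)]
  have hscale : ∀ i j, star (u i) ⬝ᵥ u j
      = (((s i : ℝ) : ℂ))⁻¹ * (((s j : ℝ) : ℂ))⁻¹ * (star (p i) ⬝ᵥ p j)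
        ∨ star (u i) ⬝ᵥ u j = 0 := by
    intro i j
    rw [hu]
    dsimp only
    rcases eq_or_ne (s i) 0 with h1 | h1
    · right; rw [if_pos h1]; simp
    · rcases eq_or_ne (s j) 0 with h2 | h2
      · right; rw [if_neg h1, if_pos h2]; simp
      · left
        rw [if_neg h1, if_neg h2, star_smul, smul_dotProduct, dotProduct_smul]
        rw [star_inv₀]
        rw [show star ((s i : ℝ) : ℂ) = ((s i : ℝ) : ℂ) from Complex.conj_ofReal _]
        rw [smul_eq_mul, smul_eq_mul]
        ring
  have hdiag : ∀ i, star (u i) ⬝ᵥ u i = 0 ∨ star (u i) ⬝ᵥ u i = 1 := by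
    intro i
    rw [hu]
    dsimp only
    rcases eq_or_ne (s i) 0 with h1 | h1
    · left; rw [if_pos h1]; simp
    · right
      rw [if_neg h1, star_smul, smul_dotProduct, dotProduct_smul,
          hpp i i, if_pos rfl, star_inv₀,
          show star ((s i : ℝ) : ℂ) = ((s i : ℝ) : ℂ) from Complex.conj_ofReal _,
          smul_eq_mul, smul_eq_mul, ← hs2 i]
      have : ((s i : ℝ) : ℂ) ≠ 0 := by exact_mod_cast h1
      field_simp
      push_cast; ring
  have hoff : ∀ i j, star (u i) ⬝ᵥ u j = if i = j then star (u i) ⬝ᵥ u i else 0 := by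
    intro i j
    rcases eq_or_ne i j with h | h
    · subst h; rw [if_pos rfl]
    · rw [if_neg h]
      rcases hscale i j with h1 | h1
      · rw [h1, hpp i j, if_neg h]; ring
      · exact h1
  exact ⟨v, u, hvorth, hoff, hdiag, hAv⟩

lemma abs_dot_comm {M : ℕ} (a b : Fin M → ℂ) :
    ‖star a ⬝ᵥ b‖ = ‖star b ⬝ᵥ a‖ := by
  rw [← Complex.norm_conj]
  congr 1
  rw [show (starRingEnd ℂ) (star a ⬝ᵥ b) = star (star a ⬝ᵥ b) from rfl,
      Matrix.star_dotProduct, star_star]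

/-- Von Neumann's trace inequality. -/
theorem stmt0 (m n : ℕ) (A B : Matrix (Fin m) (Fin n) ℂ) :
    ‖(Aᴴ * B).trace‖ ≤ ∑ i : Fin (min m n), singVal A i * singVal B i := by
  classical
  obtain ⟨v, u, hv, huo, hu1, hAv⟩ := svd_exists A
  obtain ⟨x, w, hx, hwo, hw1, hBx⟩ := svd_exists B
  have hHA : (Aᴴ * A).IsHermitian := Matrix.isHermitian_conjTranspose_mul_self A
  have hHB : (Bᴴ * B).IsHermitian := Matrix.isHermitian_conjTranspose_mul_self B
  have hPA : (Aᴴ * A).PosSemidef := Matrix.posSemidef_conjTranspose_mul_self A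
  have hPB : (Bᴴ * B).PosSemidef := Matrix.posSemidef_conjTranspose_mul_self B
  obtain ⟨-, -, hantiA⟩ := eigsDesc_spec hHA
  obtain ⟨-, -, hantiB⟩ := eigsDesc_spec hHB
  set sA : Fin n → ℝ := fun i => Real.sqrt (eigsDesc (Aᴴ * A) i) with hsA
  set tB : Fin n → ℝ := fun i => Real.sqrt (eigsDesc (Bᴴ * B) i) with htB
  have hsA0 : ∀ i, 0 ≤ sA i := fun i => Real.sqrt_nonneg _
  have htB0 : ∀ i, 0 ≤ tB i := fun i => Real.sqrt_nonneg _
  -- trace formula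
  have htr : (Aᴴ * B).trace = ∑ i, ∑ j,
      (((sA i : ℝ) : ℂ) * ((tB j : ℝ) : ℂ) * (star (u i) ⬝ᵥ w j)) * (star (x j) ⬝ᵥ v i) := by
    rw [trace_eq_sum (Aᴴ * B) v x hv hx]
    refine Finset.sum_congr rfl fun i _ => Finset.sum_congr rfl fun j _ => ?_
    congr 1
    rw [← dot_conj, hAv i, hBx j, star_smul, smul_dotProduct, dotProduct_smul,
        show star ((Real.sqrt (eigsDesc (Aᴴ * A) i) : ℝ) : ℂ)
          = ((Real.sqrt (eigsDesc (Aᴴ * A) i) : ℝ) : ℂ) from Complex.conj_ofReal _,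
        smul_eq_mul, smul_eq_mul]
    ring
  -- abs bound with product of abs
  have habs1 : ‖(Aᴴ * B).trace‖ ≤ ∑ i, ∑ j, sA i * tB j *
      (‖star (u i) ⬝ᵥ w j‖ * ‖star (x j) ⬝ᵥ v i‖) := by
    rw [htr]
    refine le_trans (norm_sum_le _ _) ?_
    refine Finset.sum_le_sum fun i _ => ?_
    refine le_trans (norm_sum_le _ _) ?_
    refine Finset.sum_le_sum fun j _ => ?_
    rw [norm_mul, norm_mul, norm_mul, Complex.norm_real, Complex.norm_real,
        Real.norm_eq_abs, Real.norm_eq_abs, abs_of_nonneg (hsA0 i), abs_of_nonneg (htB0 j)]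
    ring_nf
    exact le_refl _
  -- AM-GM per term
  have habs2 : ‖(Aᴴ * B).trace‖ ≤ ∑ i, ∑ j, sA i * tB j *
      ((‖star (u i) ⬝ᵥ w j‖ ^ 2 + ‖star (x j) ⬝ᵥ v i‖ ^ 2) / 2) := by
    refine le_trans habs1 (Finset.sum_le_sum fun i _ => Finset.sum_le_sum fun j _ => ?_)
    refine mul_le_mul_of_nonneg_left ?_ (mul_nonneg (hsA0 i) (htB0 j))
    nlinarith [sq_nonneg (‖star (u i) ⬝ᵥ w j‖ - ‖star (x j) ⬝ᵥ v i‖),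
      norm_nonneg (star (u i) ⬝ᵥ w j),
      norm_nonneg (star (x j) ⬝ᵥ v i)]
  -- lifted functions
  set a : ℕ → ℝ := fun k => if h : k < n then sA ⟨k, h⟩ else 0 with ha
  set b : ℕ → ℝ := fun k => if h : k < n then tB ⟨k, h⟩ else 0 with hb
  set D1 : ℕ → ℕ → ℝ := fun k l => if h : k < n ∧ l < n then
      (‖star (u ⟨k, h.1⟩) ⬝ᵥ w ⟨l, h.2⟩‖) ^ 2 else 0 with hD1
  set D2 : ℕ → ℕ → ℝ := fun k l => if h : k < n ∧ l < n then
      (‖star (x ⟨l, h.2⟩) ⬝ᵥ v ⟨k, h.1⟩‖) ^ 2 else 0 with hD2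
  have ha0 : ∀ k, 0 ≤ a k := by intro k; rw [ha]; dsimp only; split <;> [exact hsA0 _; rfl]
  have hb0 : ∀ k, 0 ≤ b k := by intro k; rw [hb]; dsimp only; split <;> [exact htB0 _; rfl]
  have haanti : ∀ i j, i ≤ j → a j ≤ a i := by
    intro i j hij
    rw [ha]; dsimp only
    rcases lt_or_ge j n with hj | hj
    · rw [dif_pos hj, dif_pos (lt_of_le_of_lt hij hj)]
      exact Real.sqrt_le_sqrt (hantiA ⟨i, _⟩ ⟨j, hj⟩ hij)
    · rw [dif_neg (not_lt.2 hj)]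
      exact ha0 i
  have hbanti : ∀ i j, i ≤ j → b j ≤ b i := by
    intro i j hij
    rw [hb]; dsimp only
    rcases lt_or_ge j n with hj | hj
    · rw [dif_pos hj, dif_pos (lt_of_le_of_lt hij hj)]
      exact Real.sqrt_le_sqrt (hantiB ⟨i, _⟩ ⟨j, hj⟩ hij)
    · rw [dif_neg (not_lt.2 hj)]
      exact hb0 i
  have han : ∀ k, n ≤ k → a k = 0 := by
    intro k hk; rw [ha]; dsimp only; rw [dif_neg (not_lt.2 hk)]
  have hbn : ∀ k, n ≤ k → b k = 0 := by
    intro k hk; rw [hb]; dsimp only; rw [dif_neg (not_lt.2 hk)]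
  have hD10 : ∀ k l, 0 ≤ D1 k l := by
    intro k l; rw [hD1]; dsimp only; split <;> [positivity; rfl]
  have hD20 : ∀ k l, 0 ≤ D2 k l := by
    intro k l; rw [hD2]; dsimp only; split <;> [positivity; rfl]
  -- re ≤ 1 facts
  have hure : ∀ i, (star (u i) ⬝ᵥ u i).re ≤ 1 := by
    intro i; rcases hu1 i with h | h <;> rw [h] <;> simp
  have hwre : ∀ i, (star (w i) ⬝ᵥ w i).re ≤ 1 := by
    intro i; rcases hw1 i with h | h <;> rw [h] <;> simp
  have hvre : ∀ i, (star (v i) ⬝ᵥ v i).re ≤ 1 := by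
    intro i; rw [hv i i, if_pos rfl]; simp
  have hxre : ∀ i, (star (x i) ⬝ᵥ x i).re ≤ 1 := by
    intro i; rw [hx i i, if_pos rfl]; simp
  have hvo : ∀ i j, star (v i) ⬝ᵥ v j = if i = j then star (v i) ⬝ᵥ v i else 0 := by
    intro i j; rw [hv i j, hv i i, if_pos rfl]
  have hxo : ∀ i j, star (x i) ⬝ᵥ x j = if i = j then star (x i) ⬝ᵥ x i else 0 := by
    intro i j; rw [hx i j, hx i i, if_pos rfl]
  have hv1 : ∀ i, star (v i) ⬝ᵥ v i = 0 ∨ star (v i) ⬝ᵥ v i = 1 :=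
    fun i => Or.inr (by rw [hv i i, if_pos rfl])
  have hx1 : ∀ i, star (x i) ⬝ᵥ x i = 0 ∨ star (x i) ⬝ᵥ x i = 1 :=
    fun i => Or.inr (by rw [hx i i, if_pos rfl])
  -- conversion helper
  have hconv : ∀ (N : ℕ) (F : Fin N → ℝ) (G : ℕ → ℝ), (∀ i : Fin N, F i = G i.val) →
      ∑ i : Fin N, F i = ∑ k ∈ Finset.range N, G k := by
    intro N F G h
    rw [Finset.sum_congr rfl (fun i (_ : i ∈ Finset.univ) => h i), Fin.sum_univ_eq_sum_range]
  -- row and column bounds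
  have hrow1 : ∀ k, ∑ l ∈ Finset.range n, D1 k l ≤ 1 := by
    intro k
    rcases lt_or_ge k n with hk | hk
    · have e : ∑ l : Fin n, (‖star (u ⟨k, hk⟩) ⬝ᵥ w l‖) ^ 2
          = ∑ l ∈ Finset.range n, D1 k l := by
        refine hconv n _ _ fun j => ?_
        rw [hD1]; dsimp only
        rw [dif_pos ⟨hk, j.isLt⟩]
      rw [← e]
      exact bessel w hwo hw1 (u ⟨k, hk⟩) (hure _)
    · have e : ∀ l ∈ Finset.range n, D1 k l = 0 := by
        intro l _
        rw [hD1]; dsimp only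
        rw [dif_neg (by omega)]
      rw [Finset.sum_congr rfl e]
      simp
  have hcol1 : ∀ l, ∑ k ∈ Finset.range n, D1 k l ≤ 1 := by
    intro l
    rcases lt_or_ge l n with hl | hl
    · have e : ∑ k : Fin n, (‖star (w ⟨l, hl⟩) ⬝ᵥ u k‖) ^ 2
          = ∑ k ∈ Finset.range n, D1 k l := by
        refine hconv n _ _ fun i => ?_
        rw [hD1]; dsimp only
        rw [dif_pos ⟨i.isLt, hl⟩, abs_dot_comm]
      rw [← e]
      exact bessel u huo hu1 (w ⟨l, hl⟩) (hwre _)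
    · have e : ∀ k ∈ Finset.range n, D1 k l = 0 := by
        intro k _
        rw [hD1]; dsimp only
        rw [dif_neg (by omega)]
      rw [Finset.sum_congr rfl e]
      simp
  have hrow2 : ∀ k, ∑ l ∈ Finset.range n, D2 k l ≤ 1 := by
    intro k
    rcases lt_or_ge k n with hk | hk
    · have e : ∑ l : Fin n, (‖star (v ⟨k, hk⟩) ⬝ᵥ x l‖) ^ 2
          = ∑ l ∈ Finset.range n, D2 k l := by
        refine hconv n _ _ fun j => ?_
        rw [hD2]; dsimp only
        rw [dif_pos ⟨hk, j.isLt⟩, abs_dot_comm]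
      rw [← e]
      exact bessel x hxo hx1 (v ⟨k, hk⟩) (hvre _)
    · have e : ∀ l ∈ Finset.range n, D2 k l = 0 := by
        intro l _
        rw [hD2]; dsimp only
        rw [dif_neg (by omega)]
      rw [Finset.sum_congr rfl e]
      simp
  have hcol2 : ∀ l, ∑ k ∈ Finset.range n, D2 k l ≤ 1 := by
    intro l
    rcases lt_or_ge l n with hl | hl
    · have e : ∑ k : Fin n, (‖star (x ⟨l, hl⟩) ⬝ᵥ v k‖) ^ 2
          = ∑ k ∈ Finset.range n, D2 k l := by
        refine hconv n _ _ fun i => ?_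
        rw [hD2]; dsimp only
        rw [dif_pos ⟨i.isLt, hl⟩]
      rw [← e]
      exact bessel v hvo hv1 (x ⟨l, hl⟩) (hxre _)
    · have e : ∀ k ∈ Finset.range n, D2 k l = 0 := by
        intro k _
        rw [hD2]; dsimp only
        rw [dif_neg (by omega)]
      rw [Finset.sum_congr rfl e]
      simp
  have key1 := vnkey n a b D1 ha0 hb0 haanti hbanti han hbn hD10 hrow1 hcol1
  have key2 := vnkey n a b D2 ha0 hb0 haanti hbanti han hbn hD20 hrow2 hcol2
  -- connect Fin sums with range sums
  have conn1 : ∑ i : Fin n, ∑ j : Fin n, sA i * tB j * (‖star (u i) ⬝ᵥ w j‖) ^ 2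
      = ∑ k ∈ Finset.range n, ∑ l ∈ Finset.range n, a k * b l * D1 k l := by
    refine hconv n _ _ fun i => ?_
    refine hconv n _ _ fun j => ?_
    rw [ha, hb, hD1]; dsimp only
    rw [dif_pos i.isLt, dif_pos j.isLt, dif_pos ⟨i.isLt, j.isLt⟩]
  have conn2 : ∑ i : Fin n, ∑ j : Fin n, sA i * tB j * (‖star (x j) ⬝ᵥ v i‖) ^ 2
      = ∑ k ∈ Finset.range n, ∑ l ∈ Finset.range n, a k * b l * D2 k l := by
    refine hconv n _ _ fun i => ?_
    refine hconv n _ _ fun j => ?_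
    rw [ha, hb, hD2]; dsimp only
    rw [dif_pos i.isLt, dif_pos j.isLt, dif_pos ⟨i.isLt, j.isLt⟩]
  -- split the AM-GM bound
  have hsplit : ∑ i : Fin n, ∑ j : Fin n, sA i * tB j *
      ((‖star (u i) ⬝ᵥ w j‖ ^ 2 + ‖star (x j) ⬝ᵥ v i‖ ^ 2) / 2)
      = (∑ i : Fin n, ∑ j : Fin n, sA i * tB j * (‖star (u i) ⬝ᵥ w j‖) ^ 2) / 2
        + (∑ i : Fin n, ∑ j : Fin n, sA i * tB j * (‖star (x j) ⬝ᵥ v i‖) ^ 2) / 2 := by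
    rw [Finset.sum_div, Finset.sum_div, ← Finset.sum_add_distrib]
    refine Finset.sum_congr rfl fun i _ => ?_
    rw [Finset.sum_div, Finset.sum_div, ← Finset.sum_add_distrib]
    refine Finset.sum_congr rfl fun j _ => ?_
    ring
  -- final chain
  have hmain : ‖(Aᴴ * B).trace‖ ≤ ∑ k ∈ Finset.range n, a k * b k := by
    calc ‖(Aᴴ * B).trace‖
        ≤ ∑ i : Fin n, ∑ j : Fin n, sA i * tB j *
            ((‖star (u i) ⬝ᵥ w j‖ ^ 2 + ‖star (x j) ⬝ᵥ v i‖ ^ 2) / 2) :=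
          habs2
      _ = (∑ k ∈ Finset.range n, ∑ l ∈ Finset.range n, a k * b l * D1 k l) / 2
          + (∑ k ∈ Finset.range n, ∑ l ∈ Finset.range n, a k * b l * D2 k l) / 2 := by
          rw [hsplit, conn1, conn2]
      _ ≤ (∑ k ∈ Finset.range n, a k * b k) / 2 + (∑ k ∈ Finset.range n, a k * b k) / 2 := by
          gcongr
      _ = ∑ k ∈ Finset.range n, a k * b k := by ring
  -- identify the right-hand side
  have hmin : min m n ≤ n := min_le_right m n
  have hrankA : (Aᴴ * A).rank ≤ m := by
    rw [Matrix.rank_conjTranspose_mul_self]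
    exact Matrix.rank_le_height A
  have htail : ∀ k ∈ Finset.Ico (min m n) n, a k * b k = 0 := by
    intro k hk
    rw [Finset.mem_Ico] at hk
    have hkn : k < n := hk.2
    have hmk : m ≤ k := by omega
    have : a k = 0 := by
      rw [ha]; dsimp only
      rw [dif_pos hkn, hsA]; dsimp only
      rw [eigsDesc_eq_zero hPA hrankA ⟨k, hkn⟩ hmk, Real.sqrt_zero]
    rw [this, zero_mul]
  have hhead : ∑ k ∈ Finset.range (min m n), a k * b k
      = ∑ i : Fin (min m n), singVal A i * singVal B i := by
    refine (hconv (min m n) _ _ fun i => ?_).symm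
    have h1 : (i : ℕ) < n := lt_of_lt_of_le i.isLt hmin
    rw [ha, hb]; dsimp only
    rw [dif_pos h1, dif_pos h1]
    rfl
  have hfinal : ∑ k ∈ Finset.range n, a k * b k
      = ∑ i : Fin (min m n), singVal A i * singVal B i := by
    rw [← Finset.sum_range_add_sum_Ico _ hmin, Finset.sum_congr rfl htail, Finset.sum_const,
        smul_zero, add_zero, hhead]
  rw [← hfinal]
  exact hmain
end

section
/- For m×n complex matrices A and B and indices i, j ≥ 1 with i + j − 1 ≤ min(m,n), the singular value inequality σ_{i+j−1}(A+B) ≤ σ_i(A) + σ_j(B) holds. -/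
open Matrix BigOperators Kronecker
open scoped ComplexOrder

/-!
The Courant–Fischer argument. Let `b`, `b_A`, `b_B` be orthonormal eigenbases of
`(A + B)ᴴ(A + B)`, `AᴴA`, `BᴴB`, each sorted by decreasing eigenvalue, and index singular values
from `0`. On the span of the first `k + 1` vectors of `b` one has `σ_k(A + B) ‖x‖ ≤ ‖(A + B) x‖`;
on the span of all but the first `i` vectors of `b_A` one has `‖A x‖ ≤ σ_i(A) ‖x‖`, and likewise
for `B` and `j`. For `k = i + j` the three dimensions add up to more than `2n`, so the subspaces
share a nonzero `x`, and the triangle inequality for `(A + B) x = A x + B x` gives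
`σ_{i+j}(A + B) ≤ σ_i(A) + σ_j(B)`.
-/

open Module Submodule
open scoped InnerProductSpace

section

variable {𝕜 E : Type*} [RCLike 𝕜] [NormedAddCommGroup E] [InnerProductSpace 𝕜 E]

theorem OrthonormalBasis.repr_apply_eq_zero_of_mem_span {ι : Type*} [Fintype ι]
    (b : OrthonormalBasis ι 𝕜 E) {s : Set ι} {x : E} (hx : x ∈ span 𝕜 (b '' s)) {i : ι}
    (hi : i ∉ s) : b.repr x i = 0 := by
  have hsupp := b.toBasis.repr_support_subset_of_mem_span s (by simpa using hx)
  by_contra h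
  exact hi (hsupp (by simpa using h))

theorem OrthonormalBasis.finrank_span_image {ι : Type*} [Fintype ι]
    (b : OrthonormalBasis ι 𝕜 E) (s : Finset ι) :
    finrank 𝕜 (span 𝕜 (b '' s)) = s.card := by
  rw [Set.image_eq_range]
  exact (finrank_span_eq_card (b.orthonormal.linearIndependent.comp _ Subtype.val_injective)).trans
    (by simp)

end

theorem Submodule.exists_mem_inf_inf_ne_zero {K V : Type*} [DivisionRing K] [AddCommGroup V]
    [Module K V] [FiniteDimensional K V] (U W X : Submodule K V)
    (h : 2 * finrank K V < finrank K U + finrank K W + finrank K X) :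
    ∃ x ∈ U ⊓ W ⊓ X, x ≠ 0 := by
  have hUW := Submodule.finrank_sup_add_finrank_inf_eq U W
  have hUWX := Submodule.finrank_sup_add_finrank_inf_eq (U ⊓ W) X
  have := (U ⊔ W).finrank_le
  have := ((U ⊓ W) ⊔ X).finrank_le
  refine Submodule.exists_mem_ne_zero_of_ne_bot fun hbot => ?_
  rw [hbot, finrank_bot] at hUWX
  omega

namespace LinearMap.IsSymmetric

variable {𝕜 E : Type*} [RCLike 𝕜] [NormedAddCommGroup E] [InnerProductSpace 𝕜 E]
  [FiniteDimensional 𝕜 E] {T : E →ₗ[𝕜] E} (hT : T.IsSymmetric) {n : ℕ} (hn : finrank 𝕜 E = n)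

theorem eigenvalues_fin_cast {n' : ℕ} (hn' : finrank 𝕜 E = n') (i : Fin n) :
    hT.eigenvalues hn i = hT.eigenvalues hn' (Fin.cast (hn.symm.trans hn') i) := by
  subst hn hn'
  rfl

theorem re_inner_apply_self_eq_sum (x : E) :
    RCLike.re ⟪x, T x⟫_𝕜 = ∑ i, hT.eigenvalues hn i * ‖(hT.eigenvectorBasis hn).repr x i‖ ^ 2 := by
  rw [← (hT.eigenvectorBasis hn).repr.inner_map_map, PiLp.inner_apply, map_sum]
  refine Finset.sum_congr rfl fun i _ => ?_
  rw [eigenvectorBasis_apply_self_apply, RCLike.inner_apply, mul_assoc, RCLike.mul_conj]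
  norm_cast

theorem re_inner_apply_self_le_of_mem_span {s : Set (Fin n)} {c : ℝ}
    (hs : ∀ i ∈ s, hT.eigenvalues hn i ≤ c) {x : E}
    (hx : x ∈ span 𝕜 (hT.eigenvectorBasis hn '' s)) :
    RCLike.re ⟪x, T x⟫_𝕜 ≤ c * ‖x‖ ^ 2 := by
  rw [hT.re_inner_apply_self_eq_sum hn, ← (hT.eigenvectorBasis hn).repr.norm_map,
    EuclideanSpace.norm_sq_eq, Finset.mul_sum]
  refine Finset.sum_le_sum fun i _ => ?_
  by_cases hi : i ∈ s
  · exact mul_le_mul_of_nonneg_right (hs i hi) (sq_nonneg _)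
  · simp [(hT.eigenvectorBasis hn).repr_apply_eq_zero_of_mem_span hx hi]

theorem le_re_inner_apply_self_of_mem_span {s : Set (Fin n)} {c : ℝ}
    (hs : ∀ i ∈ s, c ≤ hT.eigenvalues hn i) {x : E}
    (hx : x ∈ span 𝕜 (hT.eigenvectorBasis hn '' s)) :
    c * ‖x‖ ^ 2 ≤ RCLike.re ⟪x, T x⟫_𝕜 := by
  rw [hT.re_inner_apply_self_eq_sum hn, ← (hT.eigenvectorBasis hn).repr.norm_map,
    EuclideanSpace.norm_sq_eq, Finset.mul_sum]
  refine Finset.sum_le_sum fun i _ => ?_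
  by_cases hi : i ∈ s
  · exact mul_le_mul_of_nonneg_right (hs i hi) (sq_nonneg _)
  · simp [(hT.eigenvectorBasis hn).repr_apply_eq_zero_of_mem_span hx hi]

end LinearMap.IsSymmetric

namespace LinearMap

variable {𝕜 E F : Type*} [RCLike 𝕜] [NormedAddCommGroup E] [InnerProductSpace 𝕜 E]
  [FiniteDimensional 𝕜 E] [NormedAddCommGroup F] [InnerProductSpace 𝕜 F] [FiniteDimensional 𝕜 F]
  (T : E →ₗ[𝕜] F)

theorem re_inner_adjoint_comp_self_apply (x : E) :
    RCLike.re ⟪x, (adjoint T ∘ₗ T) x⟫_𝕜 = ‖T x‖ ^ 2 := by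
  rw [comp_apply, adjoint_inner_right, inner_self_eq_norm_sq]

theorem norm_apply_le_singularValues_mul {k : Fin (finrank 𝕜 E)} {x : E}
    (hx : x ∈ span 𝕜 (T.isSymmetric_adjoint_comp_self.eigenvectorBasis rfl '' ↑(Finset.Ici k))) :
    ‖T x‖ ≤ T.singularValues k * ‖x‖ := by
  refine le_of_pow_le_pow_left₀ two_ne_zero
    (mul_nonneg (T.singularValues_nonneg k) (norm_nonneg x)) ?_
  rw [mul_pow, T.sq_singularValues_fin rfl, ← re_inner_adjoint_comp_self_apply]
  refine T.isSymmetric_adjoint_comp_self.re_inner_apply_self_le_of_mem_span rfl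
    (fun i hi => ?_) hx
  exact T.isSymmetric_adjoint_comp_self.eigenvalues_antitone rfl (Finset.mem_Ici.mp hi)

theorem singularValues_mul_le_norm_apply {k : Fin (finrank 𝕜 E)} {x : E}
    (hx : x ∈ span 𝕜 (T.isSymmetric_adjoint_comp_self.eigenvectorBasis rfl '' ↑(Finset.Iic k))) :
    T.singularValues k * ‖x‖ ≤ ‖T x‖ := by
  refine le_of_pow_le_pow_left₀ two_ne_zero (norm_nonneg _) ?_
  rw [mul_pow, T.sq_singularValues_fin rfl, ← re_inner_adjoint_comp_self_apply]
  refine T.isSymmetric_adjoint_comp_self.le_re_inner_apply_self_of_mem_span rfl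
    (fun i hi => ?_) hx
  exact T.isSymmetric_adjoint_comp_self.eigenvalues_antitone rfl (Finset.mem_Iic.mp hi)

theorem singularValues_add_le (S : E →ₗ[𝕜] F) (i j : ℕ) :
    (T + S).singularValues (i + j) ≤ T.singularValues i + S.singularValues j := by
  rcases le_or_gt (finrank 𝕜 E) (i + j) with hij | hij
  · rw [singularValues_of_finrank_le _ hij]
    exact add_nonneg (T.singularValues_nonneg i) (S.singularValues_nonneg j)
  let window (U : E →ₗ[𝕜] F) (s : Finset (Fin (finrank 𝕜 E))) : Submodule 𝕜 E :=
    span 𝕜 (U.isSymmetric_adjoint_comp_self.eigenvectorBasis rfl '' ↑s)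
  have hcard (U : E →ₗ[𝕜] F) (s) : finrank 𝕜 (window U s) = s.card :=
    OrthonormalBasis.finrank_span_image _ s
  obtain ⟨x, ⟨⟨hx, hxT⟩, hxS⟩, hx0⟩ := Submodule.exists_mem_inf_inf_ne_zero
    (window (T + S) (Finset.Iic ⟨i + j, hij⟩)) (window T (Finset.Ici ⟨i, by omega⟩))
    (window S (Finset.Ici ⟨j, by omega⟩)) (by simp only [hcard, Fin.card_Iic, Fin.card_Ici]; omega)
  refine le_of_mul_le_mul_right ?_ (norm_pos_iff.mpr hx0)
  calc (T + S).singularValues (i + j) * ‖x‖ ≤ ‖(T + S) x‖ :=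
        (T + S).singularValues_mul_le_norm_apply hx
    _ ≤ ‖T x‖ + ‖S x‖ := norm_add_le _ _
    _ ≤ T.singularValues i * ‖x‖ + S.singularValues j * ‖x‖ :=
        add_le_add (T.norm_apply_le_singularValues_mul hxT) (S.norm_apply_le_singularValues_mul hxS)
    _ = (T.singularValues i + S.singularValues j) * ‖x‖ := by ring

end LinearMap

theorem Matrix.toEuclideanLin_conjTranspose_mul_self {𝕜 : Type*} [RCLike 𝕜] {m n : Type*}
    [Fintype m] [Fintype n] [DecidableEq m] [DecidableEq n] (A : Matrix m n 𝕜) :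
    toEuclideanLin (Aᴴ * A) = LinearMap.adjoint (toEuclideanLin A) ∘ₗ toEuclideanLin A := by
  rw [← toEuclideanLin_conjTranspose_eq_adjoint]
  exact toLpLin_mul_same 2 Aᴴ A

/- Both sides are antitone rearrangements of the same tuple: `hH.eigenvalues` is the sorted
tuple `μ` composed with an arbitrary reindexing. -/
theorem eigsDesc_eq_eigenvalues {k : ℕ} {H : Matrix (Fin k) (Fin k) ℂ} (hH : H.IsHermitian) :
    eigsDesc H =
      (isSymmetric_toEuclideanLin_iff.mpr hH).eigenvalues finrank_euclideanSpace_fin := by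
  set hT := isSymmetric_toEuclideanLin_iff.mpr hH
  set μ := hT.eigenvalues finrank_euclideanSpace_fin
  obtain ⟨π, hπ⟩ : ∃ π : Equiv.Perm (Fin k), hH.eigenvalues = μ ∘ π :=
    ⟨(Fintype.equivOfCardEq (Fintype.card_fin _)).symm.trans (finCongr (Fintype.card_fin k)),
      funext fun i => hT.eigenvalues_fin_cast _ _ _⟩
  have hdesc : eigsDesc H = μ ∘ ⇑(Fin.revPerm.trans ((Tuple.sort hH.eigenvalues).trans π)) := by
    funext i
    simp [eigsDesc, dif_pos hH, hπ]
  have hanti : Antitone (eigsDesc H) := by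
    intro a b hab
    rw [eigsDesc, dif_pos hH]
    exact Tuple.monotone_sort hH.eigenvalues (Fin.rev_le_rev.mpr hab)
  rw [hdesc] at hanti ⊢
  exact Tuple.unique_antitone (τ := Equiv.refl _) hanti (hT.eigenvalues_antitone _)

theorem singVal_eq_singularValues {m n : ℕ} (A : Matrix (Fin m) (Fin n) ℂ) (i : Fin (min m n)) :
    singVal A i = (toEuclideanLin A).singularValues i := by
  rw [(toEuclideanLin A).singularValues_of_lt finrank_euclideanSpace_fin
      (i.isLt.trans_le (min_le_right m n)), singVal,
    eigsDesc_eq_eigenvalues (posSemidef_conjTranspose_mul_self A).isHermitian]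
  congr 2
  exact toEuclideanLin_conjTranspose_mul_self A

/-- Weyl's inequality for singular values of a sum of matrices. -/
theorem stmt2 (m n : ℕ) (A B : Matrix (Fin m) (Fin n) ℂ) (i j : ℕ)
    (hi : 1 ≤ i) (hj : 1 ≤ j) (hij : i + j - 1 ≤ min m n) :
    singVal (A + B) ⟨i + j - 1 - 1, by omega⟩ ≤
      singVal A ⟨i - 1, by omega⟩ + singVal B ⟨j - 1, by omega⟩ := by
  rw [singVal_eq_singularValues, singVal_eq_singularValues, singVal_eq_singularValues, map_add]
  convert (toEuclideanLin A).singularValues_add_le (toEuclideanLin B) (i - 1) (j - 1) using 2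
  show i + j - 1 - 1 = i - 1 + (j - 1)
  omega
end

section
/- Suppose ρ_AB = Σ_a p_a |Ψ_a⟩⟨Ψ_a| is a separable density operator on ℂ^m ⊗ ℂ^n given by its spectral decomposition (the Ψ_a orthonormal eigenvectors, p_a > 0 eigenvalues). Then for each a, the largest eigenvalue λ_1^{(a)} of the reduced state ρ_A^{(a)} = Tr_B(|Ψ_a⟩⟨Ψ_a|) satisfies λ_1^{(a)} ≥ p_a. -/
open Matrix BigOperators Kronecker
open scoped ComplexOrder

/-! ### Auxiliary lemmas -/

lemma sum3_reorder' {M : Type*} [AddCommMonoid M] {α β γ : Type*}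
    [Fintype α] [Fintype β] [Fintype γ] (f : α → β → γ → M) :
    ∑ i, ∑ j, ∑ k, f i j k = ∑ k, ∑ i, ∑ j, f i j k :=
  (Finset.sum_congr rfl fun i _ => Finset.sum_comm (f := fun j k => f i j k)).trans
    (Finset.sum_comm (f := fun i k => ∑ j, f i j k))

lemma sum3_reorder {M : Type*} [AddCommMonoid M] {α β γ : Type*}
    [Fintype α] [Fintype β] [Fintype γ] (f : α → β → γ → M) :
    ∑ i, ∑ j, ∑ k, f i j k = ∑ k, ∑ i, ∑ j, f i j k := sum3_reorder' f

lemma sum4_reorder {M : Type*} [AddCommMonoid M] {α β γ δ : Type*}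
    [Fintype α] [Fintype β] [Fintype γ] [Fintype δ] (f : α → β → γ → δ → M) :
    ∑ i, ∑ j, ∑ k, ∑ l, f i j k l = ∑ j, ∑ l, ∑ k, ∑ i, f i j k l := by
  rw [Finset.sum_comm (f := fun i j => ∑ k, ∑ l, f i j k l)]
  refine Finset.sum_congr rfl fun j _ => ?_
  rw [Finset.sum_comm (f := fun i k => ∑ l, f i j k l)]
  rw [Finset.sum_comm (f := fun l k => ∑ i, f i j k l)]
  refine Finset.sum_congr rfl fun k _ => Finset.sum_comm (f := fun i l => f i j k l)

lemma trace_eq_sum_eigs {k : ℕ} {A : Matrix (Fin k) (Fin k) ℂ} (hA : A.IsHermitian) :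
    A.trace = ∑ i, (hA.eigenvalues i : ℂ) := by
  conv_lhs => rw [hA.spectral_theorem, Unitary.conjStarAlgAut_apply]
  rw [Matrix.trace_mul_cycle]
  rw [show (star (hA.eigenvectorUnitary : Matrix (Fin k) (Fin k) ℂ)) *
      (hA.eigenvectorUnitary : Matrix (Fin k) (Fin k) ℂ) = 1 from
    Unitary.coe_star_mul_self _]
  rw [one_mul, Matrix.trace_diagonal]
  simp

lemma psd_trace_re_nonneg {k : ℕ} {A : Matrix (Fin k) (Fin k) ℂ} (hA : A.PosSemidef) :
    0 ≤ A.trace.re := by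
  rw [trace_eq_sum_eigs hA.isHermitian, Complex.re_sum]
  exact Finset.sum_nonneg fun i _ => by simpa using hA.eigenvalues_nonneg i

lemma psd_mul_trace_re_nonneg {k : ℕ} {X Y : Matrix (Fin k) (Fin k) ℂ}
    (hX : X.PosSemidef) (hY : Y.PosSemidef) : 0 ≤ ((X * Y).trace).re := by
  obtain ⟨B, hB⟩ : ∃ B : Matrix (Fin k) (Fin k) ℂ, X = Bᴴ * B := by
    open MatrixOrder in
    exact ⟨CFC.sqrt X, by rw [← Matrix.star_eq_conjTranspose, (CFC.sqrt_nonneg X).isSelfAdjoint.star_eq, CFC.sqrt_mul_sqrt_self X hX.nonneg]⟩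
  have h1 : (X * Y).trace = (B * Y * Bᴴ).trace := by
    rw [hB, Matrix.trace_mul_cycle, Matrix.trace_mul_cycle]
  rw [h1]
  exact psd_trace_re_nonneg (hY.mul_mul_conjTranspose_same B)

lemma smul_one_sub_psd {k : ℕ} {A : Matrix (Fin k) (Fin k) ℂ} (hA : A.IsHermitian)
    (c : ℝ) (hc : ∀ i, hA.eigenvalues i ≤ c) :
    ((c : ℂ) • (1 : Matrix (Fin k) (Fin k) ℂ) - A).PosSemidef := by
  set U : Matrix (Fin k) (Fin k) ℂ := (hA.eigenvectorUnitary : Matrix (Fin k) (Fin k) ℂ) with hU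
  have hUU : U * star U = 1 := Unitary.coe_mul_star_self _
  have key : U * ((c : ℂ) • 1 - diagonal (RCLike.ofReal ∘ hA.eigenvalues)) * star U
      = (c : ℂ) • (1 : Matrix (Fin k) (Fin k) ℂ) - A := by
    rw [Matrix.mul_sub, Matrix.mul_smul, Matrix.mul_one, Matrix.sub_mul, Matrix.smul_mul, hUU]
    conv_rhs => rw [hA.spectral_theorem, Unitary.conjStarAlgAut_apply]
  rw [← key, Matrix.star_eq_conjTranspose]
  have hdiag : (c : ℂ) • (1 : Matrix (Fin k) (Fin k) ℂ)
      - diagonal (RCLike.ofReal ∘ hA.eigenvalues)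
      = diagonal (fun i => ((c - hA.eigenvalues i : ℝ) : ℂ)) := by
    ext i j
    by_cases h : i = j <;> simp [h, Matrix.diagonal_apply, Matrix.one_apply, Complex.ofReal_sub]
  refine Matrix.PosSemidef.mul_mul_conjTranspose_same ?_ U
  rw [hdiag]
  refine Matrix.PosSemidef.diagonal ?_
  intro i
  exact Complex.zero_le_real.mpr (by linarith [hc i])

lemma trace_mul_le_of_eig_le {k : ℕ} {X Y : Matrix (Fin k) (Fin k) ℂ}
    (hX : X.PosSemidef) (hY : Y.PosSemidef) {c : ℝ}
    (hc : ∀ i, hX.isHermitian.eigenvalues i ≤ c) :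
    ((X * Y).trace).re ≤ c * (Y.trace).re := by
  have h0 : 0 ≤ ((((c : ℂ) • 1 - X) * Y).trace).re :=
    psd_mul_trace_re_nonneg (smul_one_sub_psd hX.isHermitian c hc) hY
  have hexp : ((c : ℂ) • 1 - X) * Y = (c : ℂ) • Y - X * Y := by
    rw [Matrix.sub_mul, Matrix.smul_mul, Matrix.one_mul]
  rw [hexp, Matrix.trace_sub, Matrix.trace_smul, smul_eq_mul, Complex.sub_re,
    Complex.re_ofReal_mul] at h0
  linarith

lemma eigsDesc_zero_ge {k : ℕ} {A : Matrix (Fin k) (Fin k) ℂ} (hA : A.IsHermitian)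
    (hk : 0 < k) (i : Fin k) : hA.eigenvalues i ≤ eigsDesc A ⟨0, hk⟩ := by
  rw [eigsDesc, dif_pos hA]
  set σ := Tuple.sort hA.eigenvalues
  have hmono : Monotone (hA.eigenvalues ∘ σ) := Tuple.monotone_sort _
  have h1 : hA.eigenvalues i = (hA.eigenvalues ∘ σ) (σ.symm i) := by simp
  rw [h1]
  apply hmono
  rw [Fin.le_def, Fin.val_rev]
  have h2 : ((σ.symm i : Fin k) : ℕ) < k := (σ.symm i).isLt
  simp only []
  omega

lemma eig_le_one_of_trace_one {k : ℕ} {X : Matrix (Fin k) (Fin k) ℂ}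
    (hX : X.PosSemidef) (htr : X.trace = 1) (i : Fin k) :
    hX.isHermitian.eigenvalues i ≤ 1 := by
  have hs : ∑ j, hX.isHermitian.eigenvalues j = 1 := by
    have := trace_eq_sum_eigs hX.isHermitian
    rw [htr] at this
    have := congrArg Complex.re this.symm
    simpa [Complex.re_sum] using this
  calc hX.isHermitian.eigenvalues i
      ≤ ∑ j, hX.isHermitian.eigenvalues j :=
        Finset.single_le_sum (fun j _ => hX.eigenvalues_nonneg j) (Finset.mem_univ i)
    _ = 1 := hs

lemma ptraceB_dyad_eq {m n : ℕ} (v : Fin m × Fin n → ℂ) :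
    ptraceB (dyad v) = (Matrix.of fun i j => v (i, j)) * (Matrix.of fun i j => v (i, j))ᴴ := by
  ext i j
  simp [ptraceB, dyad, Matrix.vecMulVec_apply, Matrix.mul_apply]

lemma quad_eq_trace {m n : ℕ} (v : Fin m × Fin n → ℂ) (σ : Matrix (Fin m) (Fin m) ℂ)
    (τ : Matrix (Fin n) (Fin n) ℂ) :
    star v ⬝ᵥ ((σ ⊗ₖ τ) *ᵥ v)
      = (((Matrix.of fun i j => v (i, j))ᴴ * σ * (Matrix.of fun i j => v (i, j))) * τᵀ).trace := by
  simp only [Matrix.trace, Matrix.diag, Matrix.mul_apply, Matrix.conjTranspose_apply,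
    Matrix.transpose_apply, Matrix.of_apply, dotProduct, Matrix.mulVec,
    Matrix.kroneckerMap_apply, Fintype.sum_prod_type, Pi.star_apply,
    Finset.sum_mul, Finset.mul_sum]
  rw [sum4_reorder (f := fun i j k l => star (v (i, j)) * (σ i k * τ j l * v (k, l)))]
  refine Finset.sum_congr rfl fun j _ => Finset.sum_congr rfl fun l _ =>
    Finset.sum_congr rfl fun k _ => Finset.sum_congr rfl fun i _ => by ring

/-- Spectral separability criterion 1: for a separable state given by its spectral
decomposition, the largest eigenvalue of each pure-state marginal dominates the
corresponding ensemble probability. -/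
theorem stmt6 (m n d : ℕ) (hm : 0 < m) (p : Fin d → ℝ)
    (Psi : Fin d → (Fin m × Fin n → ℂ))
    (hortho : ∀ a b, (∑ x, (starRingEnd ℂ) (Psi a x) * Psi b x) = if a = b then 1 else 0)
    (hp : ∀ a, 0 < p a) (hpsum : ∑ a, p a = 1)
    (ρ : Matrix (Fin m × Fin n) (Fin m × Fin n) ℂ)
    (hρ : ρ = ∑ a, (p a : ℂ) • dyad (Psi a))
    (hsep : SepState ρ) :
    ∀ a, p a ≤ eigsDesc (ptraceB (dyad (Psi a))) ⟨0, hm⟩ := by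
  intro a
  obtain ⟨d', q, σ, τ, hq0, hqsum, hσ, hτ, hrep⟩ := hsep
  have horth' : ∀ a b, star (Psi a) ⬝ᵥ Psi b = if a = b then 1 else 0 := fun a b => by
    simpa [dotProduct] using hortho a b
  -- the Rayleigh quotient of ρ at Psi a equals p a
  have hray : star (Psi a) ⬝ᵥ (ρ *ᵥ Psi a) = (p a : ℂ) := by
    rw [hρ]
    have expand : star (Psi a) ⬝ᵥ ((∑ b, (p b : ℂ) • dyad (Psi b)) *ᵥ Psi a)
        = ∑ b, (p b : ℂ) * ((star (Psi a) ⬝ᵥ Psi b) * (star (Psi b) ⬝ᵥ Psi a)) := by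
      simp only [dotProduct, Matrix.mulVec, Matrix.sum_apply, Matrix.smul_apply, dyad,
        Matrix.vecMulVec_apply, Pi.star_apply, smul_eq_mul, Finset.sum_mul, Finset.mul_sum]
      rw [sum3_reorder (f := fun x y b =>
        star (Psi a x) * ((p b : ℂ) * (Psi b x * star (Psi b y)) * Psi a y))]
      refine Finset.sum_congr rfl fun b _ => ?_
      rw [Finset.sum_comm (f := fun x y =>
        star (Psi a x) * ((p b : ℂ) * (Psi b x * star (Psi b y)) * Psi a y))]
      refine Finset.sum_congr rfl fun x _ => Finset.sum_congr rfl fun y _ => by ring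
    rw [expand]
    rw [Finset.sum_eq_single a]
    · rw [horth' a a]
      simp
    · intro b _ hba
      rw [horth' a b, if_neg (fun h => hba h.symm)]
      simp
    · intro h; exact absurd (Finset.mem_univ a) h
  -- expansion via separability
  have hsum2 : star (Psi a) ⬝ᵥ (ρ *ᵥ Psi a)
      = ∑ i, (q i : ℂ) * (star (Psi a) ⬝ᵥ ((σ i ⊗ₖ τ i) *ᵥ Psi a)) := by
    rw [hrep]
    simp only [dotProduct, Matrix.mulVec, Matrix.sum_apply, Matrix.smul_apply,
      Pi.star_apply, smul_eq_mul, Finset.sum_mul, Finset.mul_sum]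
    rw [sum3_reorder (f := fun x y i =>
      star (Psi a x) * ((q i : ℂ) * (σ i ⊗ₖ τ i) x y * Psi a y))]
    refine Finset.sum_congr rfl fun i _ =>
      Finset.sum_congr rfl fun x _ => Finset.sum_congr rfl fun y _ => by ring
  -- the matrix M and its properties
  set M : Matrix (Fin m) (Fin n) ℂ := Matrix.of fun i j => Psi a (i, j) with hM
  set lam : ℝ := eigsDesc (ptraceB (dyad (Psi a))) ⟨0, hm⟩ with hlam
  have hMM : ptraceB (dyad (Psi a)) = M * Mᴴ := ptraceB_dyad_eq (Psi a)
  have hMMpsd : (M * Mᴴ).PosSemidef := Matrix.posSemidef_self_mul_conjTranspose M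
  have hlamge : ∀ i, hMMpsd.isHermitian.eigenvalues i ≤ lam := by
    intro i
    rw [hlam, hMM]
    exact eigsDesc_zero_ge hMMpsd.isHermitian hm i
  -- bound each term
  have hbound : ∀ i, (star (Psi a) ⬝ᵥ ((σ i ⊗ₖ τ i) *ᵥ Psi a)).re ≤ lam := by
    intro i
    rw [quad_eq_trace]
    have hY : (Mᴴ * σ i * M).PosSemidef := (hσ i).1.conjTranspose_mul_mul_same M
    have hXt : ((τ i)ᵀ).PosSemidef := (hτ i).1.transpose
    have htrt : ((τ i)ᵀ).trace = 1 := by rw [Matrix.trace_transpose]; exact (hτ i).2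
    have step1 : (((Mᴴ * σ i * M) * (τ i)ᵀ).trace).re
        ≤ 1 * ((Mᴴ * σ i * M).trace).re := by
      rw [Matrix.trace_mul_comm]
      exact trace_mul_le_of_eig_le hXt hY (eig_le_one_of_trace_one hXt htrt)
    have step2 : ((Mᴴ * σ i * M).trace).re ≤ lam * ((σ i).trace).re := by
      rw [Matrix.trace_mul_cycle]
      exact trace_mul_le_of_eig_le hMMpsd (hσ i).1 hlamge
    have htrσ : ((σ i).trace).re = 1 := by rw [(hσ i).2]; simp
    rw [htrσ] at step2
    linarith
  -- put everything together
  have hre : p a = ∑ i, q i * (star (Psi a) ⬝ᵥ ((σ i ⊗ₖ τ i) *ᵥ Psi a)).re := by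
    have := congrArg Complex.re (hray.symm.trans hsum2)
    simpa [Complex.re_sum, Complex.re_ofReal_mul] using this
  rw [hre]
  calc ∑ i, q i * (star (Psi a) ⬝ᵥ ((σ i ⊗ₖ τ i) *ᵥ Psi a)).re
      ≤ ∑ i, q i * lam := by
        refine Finset.sum_le_sum fun i _ => ?_
        exact mul_le_mul_of_nonneg_left (hbound i) (hq0 i)
    _ = lam := by rw [← Finset.sum_mul, hqsum, one_mul]
end

section
/- For the d-dimensional isotropic state ρ^iso(F) = F|Φ⁺⟩⟨Φ⁺| + ((1−F)/(d²−1))(I_{d²} − |Φ⁺⟩⟨Φ⁺|) with Φ⁺ = d^{−1/2} Σ_i |ii⟩: if F > 1/d then ρ^iso(F) is entangled. -/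
open Matrix BigOperators Kronecker
open scoped ComplexOrder

/-- The maximally entangled state `Φ⁺` in dimension `d`. -/
noncomputable def phiPlusd (d : ℕ) : Fin d × Fin d → ℂ := fun x =>
  if x.1 = x.2 then ((Real.sqrt d : ℝ) : ℂ)⁻¹ else 0

/-! The functional `ρ ↦ ⟨Φ⁺|ρ|Φ⁺⟩` is linear and takes the value `F` on the isotropic state.
On a product state it equals `tr (σ τᵀ) / d`, and `tr (σ τᵀ) ≤ tr σ · tr τ = 1` for density
matrices, so by convexity every separable state has `⟨Φ⁺|ρ|Φ⁺⟩ ≤ 1/d`. -/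

namespace Matrix

variable {n : Type*} [Fintype n]

attribute [local instance] Matrix.frobeniusSeminormedAddCommGroup

theorem frobenius_norm_sq_eq_re_trace {m : Type*} [Fintype m] (M : Matrix m n ℂ) :
    ‖M‖ ^ 2 = (Mᴴ * M).trace.re := by
  change ‖WithLp.toLp 2 fun i => WithLp.toLp 2 fun j => M i j‖ ^ 2 = _
  simp only [PiLp.norm_sq_eq_of_L2, trace, diag_apply, mul_apply, conjTranspose_apply,
    Complex.re_sum, Complex.star_def, ← Complex.normSq_eq_conj_mul_self, Complex.ofReal_re,
    Complex.normSq_eq_norm_sq]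
  exact Finset.sum_comm

theorem PosSemidef.re_trace_mul_le {A B : Matrix n n ℂ} (hA : A.PosSemidef) (hB : B.PosSemidef) :
    (A * B).trace.re ≤ A.trace.re * B.trace.re := by
  classical
  open scoped MatrixOrder in
  obtain ⟨X, rfl⟩ := CStarAlgebra.nonneg_iff_eq_star_mul_self.mp hA.nonneg
  open scoped MatrixOrder in
  obtain ⟨Y, rfl⟩ := CStarAlgebra.nonneg_iff_eq_star_mul_self.mp hB.nonneg
  simp only [star_eq_conjTranspose]
  have hcyc : (Xᴴ * X * (Yᴴ * Y)).trace = ((X * Yᴴ)ᴴ * (X * Yᴴ)).trace := by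
    rw [show Xᴴ * X * (Yᴴ * Y) = Xᴴ * X * Yᴴ * Y by simp only [Matrix.mul_assoc], trace_mul_comm]
    simp only [conjTranspose_mul, conjTranspose_conjTranspose, Matrix.mul_assoc]
  calc (Xᴴ * X * (Yᴴ * Y)).trace.re = ‖X * Yᴴ‖ ^ 2 := by rw [hcyc, frobenius_norm_sq_eq_re_trace]
    _ ≤ (‖X‖ * ‖Yᴴ‖) ^ 2 := by gcongr; exact frobenius_norm_mul X Yᴴ
    _ = (Xᴴ * X).trace.re * (Yᴴ * Y).trace.re := by
      rw [mul_pow, frobenius_norm_conjTranspose, frobenius_norm_sq_eq_re_trace,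
        frobenius_norm_sq_eq_re_trace]

end Matrix

noncomputable def expectation {α : Type*} [Fintype α] (v : α → ℂ) : Matrix α α ℂ →ₗ[ℂ] ℂ where
  toFun ρ := star v ⬝ᵥ ρ *ᵥ v
  map_add' ρ σ := by simp only [add_mulVec, dotProduct_add]
  map_smul' c ρ := by simp only [smul_mulVec, dotProduct_smul, smul_eq_mul, RingHom.id_apply]

section expectation

variable {α : Type*} [Fintype α] (v : α → ℂ)

theorem expectation_apply (ρ : Matrix α α ℂ) : expectation v ρ = star v ⬝ᵥ ρ *ᵥ v := rfl

theorem expectation_dyad : expectation v (dyad v) = (star v ⬝ᵥ v) ^ 2 := by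
  rw [expectation_apply, dyad, vecMulVec_mulVec, op_smul_eq_smul, dotProduct_smul, smul_eq_mul, sq]

theorem expectation_one [DecidableEq α] : expectation v 1 = star v ⬝ᵥ v := by
  rw [expectation_apply, one_mulVec]

end expectation

section phiPlusd

variable {d : ℕ}

theorem phiPlusd_apply (i j : Fin d) :
    phiPlusd d (i, j) = if i = j then ((Real.sqrt d : ℝ) : ℂ)⁻¹ else 0 := rfl

theorem star_phiPlusd_apply (x : Fin d × Fin d) : star (phiPlusd d x) = phiPlusd d x := by
  simp only [phiPlusd, apply_ite star, star_zero, star_inv₀, Complex.star_def, Complex.conj_ofReal]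

theorem ofReal_sqrt_inv_mul_self (d : ℕ) :
    ((Real.sqrt d : ℝ) : ℂ)⁻¹ * ((Real.sqrt d : ℝ) : ℂ)⁻¹ = (d : ℂ)⁻¹ := by
  rw [← mul_inv, ← Complex.ofReal_mul, Real.mul_self_sqrt d.cast_nonneg, Complex.ofReal_natCast]

theorem star_phiPlusd_dotProduct_self (hd : 0 < d) : star (phiPlusd d) ⬝ᵥ phiPlusd d = 1 := by
  simp only [dotProduct, Pi.star_apply, star_phiPlusd_apply, Fintype.sum_prod_type,
    phiPlusd_apply, ite_mul, zero_mul, mul_ite, mul_zero, Finset.sum_ite_eq, Finset.mem_univ,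
    if_true, ofReal_sqrt_inv_mul_self, Finset.sum_const, Finset.card_univ, Fintype.card_fin,
    nsmul_eq_mul]
  exact mul_inv_cancel₀ (by exact_mod_cast hd.ne')

theorem expectation_phiPlusd_kronecker (σ τ : Matrix (Fin d) (Fin d) ℂ) :
    expectation (phiPlusd d) (σ ⊗ₖ τ) = (d : ℂ)⁻¹ * (σ * τᵀ).trace := by
  simp only [expectation_apply, dotProduct, mulVec, Pi.star_apply, star_phiPlusd_apply,
    Fintype.sum_prod_type, phiPlusd_apply, kroneckerMap_apply, ite_mul, zero_mul, mul_ite,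
    mul_zero, Finset.sum_ite_irrel, Finset.sum_const_zero, Finset.sum_ite_eq, Finset.mem_univ,
    if_true, trace, diag_apply, mul_apply, transpose_apply, Finset.mul_sum]
  refine Finset.sum_congr rfl fun i _ => Finset.sum_congr rfl fun j _ => ?_
  rw [← ofReal_sqrt_inv_mul_self]
  ring

theorem re_expectation_phiPlusd_kronecker_le {σ τ : Matrix (Fin d) (Fin d) ℂ}
    (hσ : σ.PosSemidef) (hτ : τ.PosSemidef) (tσ : σ.trace = 1) (tτ : τ.trace = 1) :
    (expectation (phiPlusd d) (σ ⊗ₖ τ)).re ≤ (d : ℝ)⁻¹ := by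
  have htr := hσ.re_trace_mul_le hτ.transpose
  rw [trace_transpose, tσ, tτ, Complex.one_re, mul_one] at htr
  rw [expectation_phiPlusd_kronecker, ← Complex.ofReal_natCast, ← Complex.ofReal_inv,
    Complex.re_ofReal_mul]
  exact mul_le_of_le_one_right (by positivity) htr

theorem SepState.re_expectation_phiPlusd_le {ρ : Matrix (Fin d × Fin d) (Fin d × Fin d) ℂ}
    (hρ : SepState ρ) : (expectation (phiPlusd d) ρ).re ≤ (d : ℝ)⁻¹ := by
  obtain ⟨k, q, σ, τ, hq, hq1, hσ, hτ, rfl⟩ := hρ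
  rw [map_sum, Complex.re_sum]
  calc ∑ i, (expectation (phiPlusd d) ((q i : ℂ) • (σ i ⊗ₖ τ i))).re
      ≤ ∑ i, q i * (d : ℝ)⁻¹ := by
        refine Finset.sum_le_sum fun i _ => ?_
        rw [map_smul, smul_eq_mul, Complex.re_ofReal_mul]
        exact mul_le_mul_of_nonneg_left (re_expectation_phiPlusd_kronecker_le
          (hσ i).1 (hτ i).1 (hσ i).2 (hτ i).2) (hq i)
    _ = (d : ℝ)⁻¹ := by rw [← Finset.sum_mul, hq1, one_mul]

theorem expectation_phiPlusd_isotropic (hd : 0 < d) (F c : ℝ) :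
    expectation (phiPlusd d) ((F : ℂ) • dyad (phiPlusd d) + (c : ℂ) • (1 - dyad (phiPlusd d)))
      = F := by
  simp only [map_add, map_smul, map_sub, expectation_dyad, expectation_one,
    star_phiPlusd_dotProduct_self hd, smul_eq_mul]
  ring

end phiPlusd

theorem stmt14_general (d : ℕ) (hd : 0 < d) (F : ℝ) (hF : 1 / (d : ℝ) < F) :
    ¬ SepState ((F : ℂ) • dyad (phiPlusd d) +
        (((1 - F) / ((d : ℝ) ^ 2 - 1) : ℝ) : ℂ) • (1 - dyad (phiPlusd d))) := by
  intro hsep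
  have hle := hsep.re_expectation_phiPlusd_le
  rw [expectation_phiPlusd_isotropic hd, Complex.ofReal_re] at hle
  rw [one_div] at hF
  exact hle.not_gt hF

/-- The isotropic state with fidelity `F > 1/d` is entangled. -/
theorem stmt14 (d : ℕ) (hd : 0 < d) (F : ℝ) (hF0 : 1 / (d ^ 2 : ℝ) ≤ F) (hF1 : F ≤ 1)
    (hF : 1 / (d : ℝ) < F) :
    ¬ SepState ((F : ℂ) • dyad (phiPlusd d) +
        (((1 - F) / ((d : ℝ) ^ 2 - 1) : ℝ) : ℂ) • (1 - dyad (phiPlusd d))) :=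
  stmt14_general d hd F hF
end

section
/- For d = 2 and 1/4 ≤ F ≤ 1/2, the isotropic state ρ^iso(F) = F|Φ⁺⟩⟨Φ⁺| + ((1−F)/3)(I_4 − |Φ⁺⟩⟨Φ⁺|) on ℂ²⊗ℂ² is separable; explicitly ρ^iso(F) = (1/4) Σ_{i=1}^4 |ψ_A^{(i)}⟩⟨ψ_A^{(i)}| ⊗ |ψ_B^{(i)}⟩⟨ψ_B^{(i)}| where ψ_A^{(1)} = a|0⟩ − b|1⟩, ψ_B^{(1)} = c|0⟩ − d'|1⟩, ψ_A^{(2)} = b|0⟩ − i a|1⟩, ψ_B^{(2)} = d'|0⟩ + i c|1⟩, ψ_A^{(3)} = a|0⟩ + b|1⟩, ψ_B^{(3)} = c|0⟩ + d'|1⟩, ψ_A^{(4)} = b|0⟩ + i a|1⟩, ψ_B^{(4)} = d'|0⟩ − i c|1⟩, with a = √((3 − √(3−12F²) − 2√3·√((1−F)F))/6), b = √((3 + √(3−12F²) + 2√3·√((1−F)F))/6), c = √((3 + √(3−12F²) − 2√3·√((1−F)F))/6), d' = √((3 − √(3−12F²) + 2√3·√((1−F)F))/6). -/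
open Matrix BigOperators Kronecker
open scoped ComplexOrder

/-- The maximally entangled two-qubit state `Φ⁺ = (|00⟩ + |11⟩)/√2`. -/
noncomputable def phiPlus2 : Fin 2 × Fin 2 → ℂ := fun x =>
  if x.1 = x.2 then ((Real.sqrt 2 : ℝ) : ℂ)⁻¹ else 0

/-!
Both sides are two-qubit X-states: besides the diagonal, with pattern `(p, q, q, p)`, only the
`|00⟩⟨11|` and `|11⟩⟨00|` entries can be nonzero. For the isotropic state these are
`(1 + 2F)/6`, `(1 - F)/3` and `(4F - 1)/6`; in the mixture the phases `±1, ±i` cancel every other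
entry and leave `(a²c² + b²d'²)/2`, `(a²d'² + b²c²)/2` and `abcd'`. With `X = √(3 - 12F²)` and
`Y = 2√3 √((1 - F)F)` the squares `a², b², c², d'²` are `(3 ∓ X ∓ Y)/6`, and the three identities
reduce to `X² = 3 - 12F²`, `Y² = 12F(1 - F)`. The radicands are nonnegative because `X + Y ≤ 3`,
and `abcd' ≥ 0` matches the sign of `4F - 1`.
-/

lemma dyad_posSemidef {α : Type*} [Fintype α] (v : α → ℂ) : (dyad v).PosSemidef := by
  rw [dyad, vecMulVec_eq Unit, ← conjTranspose_replicateCol]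
  exact posSemidef_self_mul_conjTranspose _

lemma trace_dyad {α : Type*} [Fintype α] (v : α → ℂ) :
    (dyad v).trace = ((∑ i, Complex.normSq (v i) : ℝ) : ℂ) := by
  simp [dyad, dotProduct, Complex.mul_conj]

lemma sepState_sum_dyad_kron {m n d : ℕ} (q : Fin d → ℝ) (u : Fin d → Fin m → ℂ)
    (v : Fin d → Fin n → ℂ) (hq : ∀ i, 0 ≤ q i) (hq1 : ∑ i, q i = 1)
    (hu : ∀ i, ∑ j, Complex.normSq (u i j) = 1) (hv : ∀ i, ∑ j, Complex.normSq (v i j) = 1) :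
    SepState (∑ i, (q i : ℂ) • (dyad (u i) ⊗ₖ dyad (v i))) :=
  ⟨d, q, fun i => dyad (u i), fun i => dyad (v i), hq, hq1,
    fun i => ⟨dyad_posSemidef _, by rw [trace_dyad, hu, Complex.ofReal_one]⟩,
    fun i => ⟨dyad_posSemidef _, by rw [trace_dyad, hv, Complex.ofReal_one]⟩, rfl⟩

lemma dyad_phiPlus2_apply (x y : Fin 2 × Fin 2) :
    dyad phiPlus2 x y = if x.1 = x.2 ∧ y.1 = y.2 then 1 / 2 else 0 := by
  have h : ((√2 : ℝ) : ℂ)⁻¹ * ((√2 : ℝ) : ℂ)⁻¹ = 1 / 2 := by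
    rw [← mul_inv, ← Complex.ofReal_mul, Real.mul_self_sqrt zero_le_two]; norm_num
  by_cases hx : x.1 = x.2 <;> by_cases hy : y.1 = y.2 <;>
    simp [dyad, vecMulVec_apply, phiPlus2, hx, hy, h]

/-- The two-qubit X-state with diagonal `(p, q, q, p)` and coherence `r` between `|00⟩`
and `|11⟩`. -/
def xState (p q r : ℂ) : Matrix (Fin 2 × Fin 2) (Fin 2 × Fin 2) ℂ := fun x y =>
  if x = y then (if x.1 = x.2 then p else q) else if x.1 = x.2 ∧ y.1 = y.2 then r else 0

lemma isotropic_eq_xState (F : ℝ) :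
    (F : ℂ) • dyad phiPlus2 + (((1 - F) / 3 : ℝ) : ℂ) • (1 - dyad phiPlus2) =
      xState ((1 + 2 * F) / 6) ((1 - F) / 3) ((4 * F - 1) / 6) := by
  ext ⟨i, k⟩ ⟨j, l⟩
  simp only [Matrix.add_apply, Matrix.smul_apply, Matrix.sub_apply, dyad_phiPlus2_apply, one_apply]
  fin_cases i <;> fin_cases k <;> fin_cases j <;> fin_cases l <;> simp [xState] <;> ring

lemma sum_dyad_kron_eq_xState (a b c d : ℝ) :
    (1 / 4 : ℂ) •
        (dyad ![(a : ℂ), -(b : ℂ)] ⊗ₖ dyad ![(c : ℂ), -(d : ℂ)] +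
         dyad ![(b : ℂ), -(Complex.I * (a : ℂ))] ⊗ₖ dyad ![(d : ℂ), Complex.I * (c : ℂ)] +
         dyad ![(a : ℂ), (b : ℂ)] ⊗ₖ dyad ![(c : ℂ), (d : ℂ)] +
         dyad ![(b : ℂ), Complex.I * (a : ℂ)] ⊗ₖ dyad ![(d : ℂ), -(Complex.I * (c : ℂ))]) =
      xState ((a ^ 2 * c ^ 2 + b ^ 2 * d ^ 2) / 2) ((a ^ 2 * d ^ 2 + b ^ 2 * c ^ 2) / 2)
        (a * b * c * d) := by
  ext ⟨i, k⟩ ⟨j, l⟩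
  simp only [Matrix.add_apply, Matrix.smul_apply, kroneckerMap_apply, dyad, vecMulVec_apply]
  fin_cases i <;> fin_cases k <;> fin_cases j <;> fin_cases l <;>
    simp [xState, Complex.conj_ofReal] <;> grind [Complex.I_sq]

lemma add_le_three_of_sq {F X Y : ℝ} (hX0 : 0 ≤ X) (hY0 : 0 ≤ Y) (hX : X ^ 2 = 3 - 12 * F ^ 2)
    (hY : Y ^ 2 = 12 * F - 12 * F ^ 2) : X + Y ≤ 3 := by
  have hXY : X * Y ≤ 3 - 6 * F + 12 * F ^ 2 := by
    refine (pow_le_pow_iff_left₀ (by positivity) (by nlinarith) two_ne_zero).1 ?_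
    -- `(3 - 6F + 12F²)² - (XY)² = 9(4F - 1)²`
    nlinarith [sq_nonneg (4 * F - 1)]
  refine (pow_le_pow_iff_left₀ (by positivity) zero_le_three two_ne_zero).1 ?_
  nlinarith

lemma isotropic_coeff_relations_of_sq {F X Y a b c d : ℝ} (hX : X ^ 2 = 3 - 12 * F ^ 2)
    (hY : Y ^ 2 = 12 * F - 12 * F ^ 2) (ha : a ^ 2 = (3 - X - Y) / 6) (hb : b ^ 2 = (3 + X + Y) / 6)
    (hc : c ^ 2 = (3 + X - Y) / 6) (hd : d ^ 2 = (3 - X + Y) / 6) :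
    a ^ 2 * c ^ 2 + b ^ 2 * d ^ 2 = (1 + 2 * F) / 3 ∧
      a ^ 2 * d ^ 2 + b ^ 2 * c ^ 2 = (2 - 2 * F) / 3 ∧
      (a * b * c * d) ^ 2 = ((4 * F - 1) / 6) ^ 2 := by
  refine ⟨?_, ?_, ?_⟩
  · rw [ha, hb, hc, hd]; linear_combination (-1 / 18) * hX + (1 / 18) * hY
  · rw [ha, hb, hc, hd]; linear_combination (1 / 18) * hX + (-1 / 18) * hY
  · rw [mul_pow, mul_pow, mul_pow, ha, hb, hc, hd]
    linear_combination ((-18 + X ^ 2 + (3 - 12 * F ^ 2) - 2 * Y ^ 2) / 1296) * hX +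
        ((-18 + Y ^ 2 + (12 * F - 12 * F ^ 2) - 2 * (3 - 12 * F ^ 2)) / 1296) * hY

lemma isotropic_coeff_relations {F a b c d : ℝ} (hF1 : 1 / 4 ≤ F) (hF2 : F ≤ 1 / 2)
    (ha : a = √((3 - √(3 - 12 * F ^ 2) - 2 * √3 * √((1 - F) * F)) / 6))
    (hb : b = √((3 + √(3 - 12 * F ^ 2) + 2 * √3 * √((1 - F) * F)) / 6))
    (hc : c = √((3 + √(3 - 12 * F ^ 2) - 2 * √3 * √((1 - F) * F)) / 6))
    (hd : d = √((3 - √(3 - 12 * F ^ 2) + 2 * √3 * √((1 - F) * F)) / 6)) :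
    a ^ 2 + b ^ 2 = 1 ∧ c ^ 2 + d ^ 2 = 1 ∧
      a ^ 2 * c ^ 2 + b ^ 2 * d ^ 2 = (1 + 2 * F) / 3 ∧
      a ^ 2 * d ^ 2 + b ^ 2 * c ^ 2 = (2 - 2 * F) / 3 ∧
      a * b * c * d = (4 * F - 1) / 6 := by
  set X := √(3 - 12 * F ^ 2)
  set Y := 2 * √3 * √((1 - F) * F)
  have hX0 : 0 ≤ X := Real.sqrt_nonneg _
  have hY0 : 0 ≤ Y := by positivity
  have hX : X ^ 2 = 3 - 12 * F ^ 2 := Real.sq_sqrt (by nlinarith)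
  have hY : Y ^ 2 = 12 * F - 12 * F ^ 2 := by
    rw [mul_pow, mul_pow, Real.sq_sqrt zero_le_three, Real.sq_sqrt (by nlinarith)]; ring
  have hXY := add_le_three_of_sq hX0 hY0 hX hY
  have ha2 : a ^ 2 = (3 - X - Y) / 6 := by rw [ha]; exact Real.sq_sqrt (by linarith)
  have hb2 : b ^ 2 = (3 + X + Y) / 6 := by rw [hb]; exact Real.sq_sqrt (by linarith)
  have hc2 : c ^ 2 = (3 + X - Y) / 6 := by rw [hc]; exact Real.sq_sqrt (by linarith)
  have hd2 : d ^ 2 = (3 - X + Y) / 6 := by rw [hd]; exact Real.sq_sqrt (by linarith)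
  obtain ⟨h1, h2, h3⟩ := isotropic_coeff_relations_of_sq hX hY ha2 hb2 hc2 hd2
  have habcd : 0 ≤ a * b * c * d := by rw [ha, hb, hc, hd]; positivity
  refine ⟨by rw [ha2, hb2]; ring, by rw [hc2, hd2]; ring, h1, h2,
    (pow_left_inj₀ habcd (by linarith) two_ne_zero).1 h3⟩

/-- Explicit separable decomposition of the two-qubit isotropic state for
`1/4 ≤ F ≤ 1/2`. -/
theorem stmt15 (F : ℝ) (hF1 : 1 / 4 ≤ F) (hF2 : F ≤ 1 / 2)
    (a b c d' : ℝ)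
    (ha : a = Real.sqrt ((3 - Real.sqrt (3 - 12 * F ^ 2) -
        2 * Real.sqrt 3 * Real.sqrt ((1 - F) * F)) / 6))
    (hb : b = Real.sqrt ((3 + Real.sqrt (3 - 12 * F ^ 2) +
        2 * Real.sqrt 3 * Real.sqrt ((1 - F) * F)) / 6))
    (hc : c = Real.sqrt ((3 + Real.sqrt (3 - 12 * F ^ 2) -
        2 * Real.sqrt 3 * Real.sqrt ((1 - F) * F)) / 6))
    (hd : d' = Real.sqrt ((3 - Real.sqrt (3 - 12 * F ^ 2) +
        2 * Real.sqrt 3 * Real.sqrt ((1 - F) * F)) / 6)) :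
    ((F : ℂ) • dyad phiPlus2 + (((1 - F) / 3 : ℝ) : ℂ) • (1 - dyad phiPlus2) =
      (1 / 4 : ℂ) •
        (dyad ![(a : ℂ), -(b : ℂ)] ⊗ₖ dyad ![(c : ℂ), -(d' : ℂ)] +
         dyad ![(b : ℂ), -(Complex.I * (a : ℂ))] ⊗ₖ dyad ![(d' : ℂ), Complex.I * (c : ℂ)] +
         dyad ![(a : ℂ), (b : ℂ)] ⊗ₖ dyad ![(c : ℂ), (d' : ℂ)] +
         dyad ![(b : ℂ), Complex.I * (a : ℂ)] ⊗ₖ dyad ![(d' : ℂ), -(Complex.I * (c : ℂ))])) ∧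
    SepState ((F : ℂ) • dyad phiPlus2 + (((1 - F) / 3 : ℝ) : ℂ) • (1 - dyad phiPlus2)) := by
  obtain ⟨hab, hcd, h1, h2, h3⟩ := isotropic_coeff_relations hF1 hF2 ha hb hc hd
  have hcoeffs : xState ((1 + 2 * F) / 6) ((1 - F) / 3) ((4 * F - 1) / 6) =
      xState ((a ^ 2 * c ^ 2 + b ^ 2 * d' ^ 2) / 2) ((a ^ 2 * d' ^ 2 + b ^ 2 * c ^ 2) / 2)
        (a * b * c * d') := by
    congr 1 <;> norm_cast <;> linarith
  have key := (isotropic_eq_xState F).trans (hcoeffs.trans (sum_dyad_kron_eq_xState a b c d').symm)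
  refine ⟨key, key ▸ ?_⟩
  let u : Fin 4 → Fin 2 → ℂ := ![![a, -b], ![b, -(Complex.I * a)], ![a, b], ![b, Complex.I * a]]
  let v : Fin 4 → Fin 2 → ℂ := ![![c, -d'], ![d', Complex.I * c], ![c, d'], ![d', -(Complex.I * c)]]
  have hu : ∀ i, ∑ j, Complex.normSq (u i j) = 1 := by
    intro i; fin_cases i <;> simp [u, Fin.sum_univ_two] <;> linarith
  have hv : ∀ i, ∑ j, Complex.normSq (v i j) = 1 := by
    intro i; fin_cases i <;> simp [v, Fin.sum_univ_two] <;> linarith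
  convert sepState_sum_dyad_kron (fun _ => 1 / 4) u v (fun _ => by norm_num) (by norm_num) hu hv
    using 1
  simp [u, v, Fin.sum_univ_four, smul_add]
end

section
/- If a bipartite density operator ρ_AB on ℂ^m ⊗ ℂ^n is separable, then rank(ρ_AB) ≥ max(rank(ρ_A), rank(ρ_B)), where ρ_A = Tr_B(ρ_AB) and ρ_B = Tr_A(ρ_AB) are the reduced density operators. -/
open Matrix BigOperators Kronecker
open scoped ComplexOrder

open Module Submodule

/-- elementary tensor of two vectors -/
def tens {m n : ℕ} (v : Fin m → ℂ) (w : Fin n → ℂ) : Fin m × Fin n → ℂ := fun p => v p.1 * w p.2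

lemma rank_sum_dyad {α : Type*} [Fintype α] [DecidableEq α] {ι : Type*} [Fintype ι] (u : ι → α → ℂ) :
    (∑ j, dyad (u j)).rank = finrank ℂ (span ℂ (Set.range u)) := by
  classical
  have hM : (∑ j, dyad (u j)) =
      (Matrix.of fun a (j : ι) => u j a) * (Matrix.of fun a (j : ι) => u j a)ᴴ := by
    ext a b
    simp [Matrix.sum_apply, Matrix.mul_apply, dyad, Matrix.vecMulVec_apply]
  rw [hM, Matrix.rank_self_mul_conjTranspose, Matrix.rank_eq_finrank_span_cols]
  have : (Matrix.of fun a (j : ι) => u j a).col = u := rfl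
  rw [this]

lemma key_le {m n : ℕ} {ι : Type*} [Fintype ι]
    (v : ι → Fin m → ℂ) (w : ι → Fin n → ℂ) (vt : ι → Fin m → ℂ)
    (h : ∀ j, vt j = 0 ∨ (w j ≠ 0 ∧ ∃ c : ℂ, vt j = c • v j)) :
    finrank ℂ (span ℂ (Set.range vt)) ≤
      finrank ℂ (span ℂ (Set.range fun j => tens (v j) (w j))) := by
  classical
  obtain ⟨b, hbsub, hbspan, hbind⟩ := exists_linearIndependent ℂ (Set.range vt)
  have hbfin : b.Finite := (Set.finite_range vt).subset hbsub
  haveI : Fintype b := hbfin.fintype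
  choose jf hjf using fun x : b => hbsub x.2
  have hxne : ∀ x : b, (x : Fin m → ℂ) ≠ 0 := fun x => hbind.ne_zero x
  have hw0 : ∀ x : b, w (jf x) ≠ 0 := by
    intro x
    rcases h (jf x) with h0 | ⟨hw, _⟩
    · exact absurd ((hjf x).symm.trans h0) (hxne x)
    · exact hw
  have hc : ∀ x : b, ∃ c : ℂ, c ≠ 0 ∧ (x : Fin m → ℂ) = c • v (jf x) := by
    intro x
    rcases h (jf x) with h0 | ⟨-, c, hcv⟩
    · exact absurd ((hjf x).symm.trans h0) (hxne x)
    · refine ⟨c, ?_, (hjf x).symm.trans hcv⟩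
      rintro rfl
      exact hxne x ((hjf x).symm.trans (by simpa using hcv))
  choose cf hcf0 hcf using hc
  set W := span ℂ (Set.range fun j => tens (v j) (w j)) with hW
  have hmem : ∀ x : b, tens (v (jf x)) (w (jf x)) ∈ W := fun x =>
    subset_span ⟨jf x, rfl⟩
  -- independence of the tensor family
  have hind : LinearIndependent ℂ (fun x : b => tens (v (jf x)) (w (jf x))) := by
    rw [Fintype.linearIndependent_iff]
    intro cc hs x
    by_contra hx
    apply hw0 x
    funext k
    have hk : ∑ y : b, (cc y * w (jf y) k * (cf y)⁻¹) • (y : Fin m → ℂ) = 0 := by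
      funext i
      have := congrFun hs (i, k)
      simp only [Finset.sum_apply, Pi.smul_apply, Pi.zero_apply, smul_eq_mul, tens] at this ⊢
      rw [← this]
      refine Finset.sum_congr rfl fun y _ => ?_
      have hy : (y : Fin m → ℂ) i = cf y * v (jf y) i := by
        rw [hcf y]; simp
      rw [hy]
      field_simp [hcf0 y]
    have := (Fintype.linearIndependent_iff.mp hbind) _ hk x
    have h2 : cc x * w (jf x) k = 0 := by
      have h3 := mul_eq_zero.mp this
      rcases h3 with h3 | h3
      · exact h3
      · exact absurd (inv_eq_zero.mp h3) (hcf0 x)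
    rcases mul_eq_zero.mp h2 with h4 | h4
    · exact absurd h4 hx
    · exact h4
  -- restrict to W
  have hindW : LinearIndependent ℂ (fun x : b => (⟨tens (v (jf x)) (w (jf x)), hmem x⟩ : W)) := by
    apply LinearIndependent.of_comp W.subtype
    exact hind
  have hcard := hindW.fintype_card_le_finrank
  calc finrank ℂ (span ℂ (Set.range vt)) = finrank ℂ (span ℂ b) := by rw [hbspan]
    _ = b.toFinset.card := finrank_span_set_eq_card hbind
    _ = Fintype.card b := by simp [Set.toFinset_card]
    _ ≤ finrank ℂ W := hcard

lemma finrank_span_tens_comm {m n : ℕ} {ι : Type*} [Fintype ι]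
    (v : ι → Fin m → ℂ) (w : ι → Fin n → ℂ) :
    finrank ℂ (span ℂ (Set.range fun j => tens (w j) (v j))) =
      finrank ℂ (span ℂ (Set.range fun j => tens (v j) (w j))) := by
  let e : (Fin m × Fin n → ℂ) ≃ₗ[ℂ] (Fin n × Fin m → ℂ) :=
    LinearEquiv.funCongrLeft ℂ ℂ (Equiv.prodComm (Fin n) (Fin m))
  have hspan : (span ℂ (Set.range fun j => tens (w j) (v j))) =
      (span ℂ (Set.range fun j => tens (v j) (w j))).map (e : (Fin m × Fin n → ℂ) →ₗ[ℂ] (Fin n × Fin m → ℂ)) := by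
    rw [Submodule.map_span]
    congr 1
    rw [← Set.range_comp]
    apply congrArg
    funext j
    funext p
    obtain ⟨k, i⟩ := p
    simp [tens, e, mul_comm]
  rw [hspan]
  exact LinearEquiv.finrank_map_eq e _

/-- A separable state has rank at least the ranks of both of its reductions. -/
theorem stmt17 (m n : ℕ) (ρ : Matrix (Fin m × Fin n) (Fin m × Fin n) ℂ)
    (hpsd : ρ.PosSemidef) (htr : ρ.trace = 1) (hsep : SepState ρ) :
    max (ptraceB ρ).rank (ptraceA ρ).rank ≤ ρ.rank := by
  classical
  obtain ⟨d, q, σ, τ, hq0, hq1, hσ, hτ, hrep⟩ := hsep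
  choose B hB using fun i => (show ∃ B : Matrix (Fin m) (Fin m) ℂ, σ i = Bᴴ * B by
    open scoped MatrixOrder in exact CStarAlgebra.nonneg_iff_eq_star_mul_self.mp (hσ i).1.nonneg)
  choose C hC using fun i => (show ∃ C : Matrix (Fin n) (Fin n) ℂ, τ i = Cᴴ * C by
    open scoped MatrixOrder in exact CStarAlgebra.nonneg_iff_eq_star_mul_self.mp (hτ i).1.nonneg)
  set v : (Fin d × Fin m × Fin n) → Fin m → ℂ :=
    fun j => ((Real.sqrt (q j.1) : ℝ) : ℂ) • star (B j.1 j.2.1) with hv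
  set w : (Fin d × Fin m × Fin n) → Fin n → ℂ := fun j => star (C j.1 j.2.2) with hw
  -- the representation of ρ as a sum of dyads of product vectors
  have hρ : ρ = ∑ j : Fin d × Fin m × Fin n, dyad (tens (v j) (w j)) := by
    rw [hrep, Fintype.sum_prod_type]
    refine Finset.sum_congr rfl fun i _ => ?_
    ext ⟨i1, k1⟩ ⟨i2, k2⟩
    rw [hB i, hC i]
    simp only [Matrix.smul_apply, Matrix.kroneckerMap_apply, Matrix.sum_apply,
      Matrix.mul_apply, Matrix.conjTranspose_apply, dyad, Matrix.vecMulVec_apply,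
      tens, hv, hw, Pi.smul_apply, Pi.star_apply, smul_eq_mul, star_mul',
      RCLike.star_def, Fintype.sum_prod_type, Complex.conj_conj,
      Complex.conj_ofReal]
    simp only [Finset.mul_sum, Finset.sum_mul]
    rw [Finset.sum_comm]
    refine Finset.sum_congr rfl fun a _ => ?_
    refine Finset.sum_congr rfl fun bb _ => ?_
    have hsq : ((Real.sqrt (q i) : ℂ)) * ((Real.sqrt (q i) : ℂ)) = (q i : ℂ) := by
      rw [← Complex.ofReal_mul, Real.mul_self_sqrt (hq0 i)]
    rw [← hsq]
    ring
  -- partial trace B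
  have hptB : ptraceB ρ = ∑ j : Fin d × Fin m × Fin n,
      dyad (((Real.sqrt (∑ k, Complex.normSq (w j k)) : ℝ) : ℂ) • v j) := by
    ext i1 i2
    rw [hρ]
    show ∑ k : Fin n, (∑ j : Fin d × Fin m × Fin n, dyad (tens (v j) (w j))) (i1, k) (i2, k) = _
    simp only [Matrix.sum_apply]
    rw [Finset.sum_comm]
    refine Finset.sum_congr rfl fun j _ => ?_
    simp only [dyad, Matrix.vecMulVec_apply, tens, Pi.smul_apply, Pi.star_apply,
      smul_eq_mul, star_mul', RCLike.star_def, Complex.conj_ofReal]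
    have : ∀ k : Fin n, v j i1 * w j k * ((starRingEnd ℂ) (v j i2) * (starRingEnd ℂ) (w j k))
        = (Complex.normSq (w j k) : ℂ) * (v j i1 * (starRingEnd ℂ) (v j i2)) := by
      intro k
      rw [← Complex.mul_conj]
      ring
    rw [Finset.sum_congr rfl fun k _ => this k, ← Finset.sum_mul]
    have hnn : (0:ℝ) ≤ ∑ k, Complex.normSq (w j k) :=
      Finset.sum_nonneg fun k _ => Complex.normSq_nonneg _
    rw [← Complex.ofReal_sum]
    have hsq : ((Real.sqrt (∑ k, Complex.normSq (w j k)) : ℂ))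
        * ((Real.sqrt (∑ k, Complex.normSq (w j k)) : ℂ))
        = ((∑ k, Complex.normSq (w j k) : ℝ) : ℂ) := by
      rw [← Complex.ofReal_mul, Real.mul_self_sqrt hnn]
    rw [← hsq]; ring
  have hptA : ptraceA ρ = ∑ j : Fin d × Fin m × Fin n,
      dyad (((Real.sqrt (∑ i, Complex.normSq (v j i)) : ℝ) : ℂ) • w j) := by
    ext k1 k2
    rw [hρ]
    show ∑ i : Fin m, (∑ j : Fin d × Fin m × Fin n, dyad (tens (v j) (w j))) (i, k1) (i, k2) = _
    simp only [Matrix.sum_apply]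
    rw [Finset.sum_comm]
    refine Finset.sum_congr rfl fun j _ => ?_
    simp only [dyad, Matrix.vecMulVec_apply, tens, Pi.smul_apply, Pi.star_apply,
      smul_eq_mul, star_mul', RCLike.star_def, Complex.conj_ofReal]
    have : ∀ i : Fin m, v j i * w j k1 * ((starRingEnd ℂ) (v j i) * (starRingEnd ℂ) (w j k2))
        = (Complex.normSq (v j i) : ℂ) * (w j k1 * (starRingEnd ℂ) (w j k2)) := by
      intro i
      rw [← Complex.mul_conj]
      ring
    rw [Finset.sum_congr rfl fun i _ => this i, ← Finset.sum_mul]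
    have hnn : (0:ℝ) ≤ ∑ i, Complex.normSq (v j i) :=
      Finset.sum_nonneg fun i _ => Complex.normSq_nonneg _
    rw [← Complex.ofReal_sum]
    have hsq : ((Real.sqrt (∑ i, Complex.normSq (v j i)) : ℂ))
        * ((Real.sqrt (∑ i, Complex.normSq (v j i)) : ℂ))
        = ((∑ i, Complex.normSq (v j i) : ℝ) : ℂ) := by
      rw [← Complex.ofReal_mul, Real.mul_self_sqrt hnn]
    rw [← hsq]; ring
  -- ranks
  have hrρ : ρ.rank = finrank ℂ (span ℂ (Set.range fun j => tens (v j) (w j))) := by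
    rw [hρ]; exact rank_sum_dyad (fun j => tens (v j) (w j))
  have hrB : (ptraceB ρ).rank ≤ ρ.rank := by
    rw [hptB, rank_sum_dyad (fun j => ((Real.sqrt (∑ k, Complex.normSq (w j k)) : ℝ) : ℂ) • v j), hrρ]
    apply key_le v w
    intro j
    by_cases hwj : w j = 0
    · left
      have : ∑ k, Complex.normSq (w j k) = 0 := by
        simp [hwj]
      rw [this]
      simp
    · right
      exact ⟨hwj, _, rfl⟩
  have hrA : (ptraceA ρ).rank ≤ ρ.rank := by
    rw [hptA, rank_sum_dyad (fun j => ((Real.sqrt (∑ i, Complex.normSq (v j i)) : ℝ) : ℂ) • w j), hrρ, ← finrank_span_tens_comm v w]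
    apply key_le w v
    intro j
    by_cases hvj : v j = 0
    · left
      have : ∑ i, Complex.normSq (v j i) = 0 := by
        simp [hvj]
      rw [this]
      simp
    · right
      exact ⟨hvj, _, rfl⟩
  exact max_le hrB hrA
end
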